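/- arXiv:2003.08914 — 8 statements merged into one kernel-verified Lean document; each statement's English description precedes it below -/
import Mathlib

section
/- For every real number s > 1 and every integer D, the Dirichlet L-series ζ_D(s) = ∑_{m odd, m ≥ 1} (D/m) m^{-s} satisfies ζ_D(s) ≥ (1 + 2^{-s}) ζ(2s)/ζ(s). -/
/-!
Both sides have Euler products. With `x = p ^ (-s)` and `c = χ_D(p) ∈ {-1, 0, 1}`, the local
factors satisfy `(1 - x²)⁻¹ ≤ (1 - c x)⁻¹ (1 - x)⁻¹` since `(1 - c x)(1 - x) ≤ 1 - x²` amounts to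
`x (1 - x)(1 + c) ≥ 0`. At `p = 2` we have `c = 0` and the right side equals `(1 - x²)⁻¹ (1 + x)`
exactly. Multiplying over all primes gives `ζ(2s) (1 + 2^{-s}) ≤ ζ_D(s) ζ(s)`.
-/

/-- The Riemann zeta function for real `s > 1`, as a series. -/
noncomputable def zeta (s : ℝ) : ℝ := ∑' m : ℕ, (m : ℝ) ^ (-s)

/-- The Dirichlet series `ζ_D(s) = ∑_{m odd} (D/m) m^{-s}` with `(D/m)` the Jacobi symbol. -/
noncomputable def zetaD (D : ℤ) (s : ℝ) : ℝ :=
  ∑' m : ℕ, if Odd m then (jacobiSym D m : ℝ) * (m : ℝ) ^ (-s) else 0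

open Nat (Primes)

theorem hasProd_le_hasProd_of_nonneg {ι R : Type*} [CommSemiring R] [PartialOrder R]
    [IsOrderedRing R] [TopologicalSpace R] [OrderClosedTopology R] {f g : ι → R} {a b : R}
    (h0 : ∀ i, 0 ≤ f i) (h : ∀ i, f i ≤ g i) (hf : HasProd f a) (hg : HasProd g b) : a ≤ b :=
  le_of_tendsto_of_tendsto' hf hg fun _ ↦ Finset.prod_le_prod (fun i _ ↦ h0 i) (fun i _ ↦ h i)

noncomputable def rpowNegHom (s : ℝ) (hs : s ≠ 0) : ℕ →*₀ ℝ where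
  toFun m := (m : ℝ) ^ (-s)
  map_zero' := by rw [Nat.cast_zero, Real.zero_rpow (neg_ne_zero.mpr hs)]
  map_one' := by simp
  map_mul' m n := by rw [Nat.cast_mul, Real.mul_rpow m.cast_nonneg n.cast_nonneg]

@[simp] lemma rpowNegHom_apply (s : ℝ) (hs : s ≠ 0) (m : ℕ) :
    rpowNegHom s hs m = (m : ℝ) ^ (-s) := rfl

/-- The character `χ_D`; the Jacobi symbol already vanishes when `gcd(D, m) ≠ 1`. -/
noncomputable def jacobiChar (D : ℤ) : ℕ →*₀ ℝ where
  toFun m := if Odd m then (jacobiSym D m : ℝ) else 0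
  map_zero' := by simp
  map_one' := by simp
  map_mul' m n := by
    by_cases hm : Odd m
    · by_cases hn : Odd n
      · have : NeZero m := ⟨hm.pos.ne'⟩
        have : NeZero n := ⟨hn.pos.ne'⟩
        simp [hm, hn, hm.mul hn, jacobiSym.mul_right]
      · simp [hn, Nat.odd_mul]
    · simp [hm, Nat.odd_mul]

@[simp] lemma jacobiChar_apply (D : ℤ) (m : ℕ) :
    jacobiChar D m = if Odd m then (jacobiSym D m : ℝ) else 0 := rfl

lemma abs_jacobiChar_le_one (D : ℤ) (m : ℕ) : |jacobiChar D m| ≤ 1 := by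
  rw [jacobiChar_apply]
  split
  · rcases jacobiSym.trichotomy D m with h | h | h <;> simp [h]
  · simp

lemma jacobiChar_two (D : ℤ) : jacobiChar D 2 = 0 := by simp

lemma summable_norm_rpowNegHom {s : ℝ} (hs : 1 < s) :
    Summable fun m ↦ ‖rpowNegHom s (by positivity) m‖ := by
  simpa [abs_of_nonneg (Real.rpow_nonneg (Nat.cast_nonneg _) _)]
    using Real.summable_nat_rpow.mpr (by linarith : -s < -1)

lemma hasProd_zeta {s : ℝ} (hs : 1 < s) :
    HasProd (fun p : Primes ↦ (1 - ((p : ℕ) : ℝ) ^ (-s))⁻¹) (zeta s) := by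
  simpa only [rpowNegHom_apply, zeta]
    using EulerProduct.eulerProduct_completely_multiplicative_hasProd (summable_norm_rpowNegHom hs)

lemma hasProd_zetaD (D : ℤ) {s : ℝ} (hs : 1 < s) :
    HasProd (fun p : Primes ↦ (1 - jacobiChar D p * ((p : ℕ) : ℝ) ^ (-s))⁻¹) (zetaD D s) := by
  let f := jacobiChar D * rpowNegHom s (by positivity)
  have hf : ∀ m, f m = jacobiChar D m * (m : ℝ) ^ (-s) := fun _ ↦ rfl
  have hsum : Summable fun m ↦ ‖f m‖ := by
    refine (summable_norm_rpowNegHom hs).of_nonneg_of_le (fun _ ↦ norm_nonneg _) fun m ↦ ?_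
    rw [hf, norm_mul, rpowNegHom_apply, Real.norm_of_nonneg (Real.rpow_nonneg m.cast_nonneg _)]
    exact mul_le_of_le_one_left (Real.rpow_nonneg m.cast_nonneg _) (abs_jacobiChar_le_one D m)
  have htsum : ∑' m, f m = zetaD D s := tsum_congr fun m ↦ by
    simp only [hf, jacobiChar_apply, ite_mul, zero_mul]
  have hprod := EulerProduct.eulerProduct_completely_multiplicative_hasProd hsum
  rw [htsum] at hprod
  simpa only [hf] using hprod

lemma inv_one_sub_sq_le {c x : ℝ} (hc : |c| ≤ 1) (hx0 : 0 ≤ x) (hx1 : x < 1) :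
    (1 - x ^ 2)⁻¹ ≤ (1 - c * x)⁻¹ * (1 - x)⁻¹ := by
  obtain ⟨hc₁, hc₂⟩ := abs_le.mp hc
  have hcx : c * x ≤ x := by nlinarith
  rw [← mul_inv]
  refine inv_anti₀ (mul_pos (by linarith) (by linarith)) ?_
  nlinarith [mul_nonneg (mul_nonneg hx0 (sub_nonneg.mpr hx1.le)) (neg_le_iff_add_nonneg.mp hc₁)]

lemma inv_one_sub_sq_mul_one_add {x : ℝ} (hx : 0 ≤ x) :
    (1 - x ^ 2)⁻¹ * (1 + x) = (1 - x)⁻¹ := by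
  rw [show 1 - x ^ 2 = (1 - x) * (1 + x) by ring, mul_inv, mul_assoc,
    inv_mul_cancel₀ (by positivity), mul_one]

lemma prime_rpow_neg_lt_one (p : Primes) {s : ℝ} (hs : 0 < s) : ((p : ℕ) : ℝ) ^ (-s) < 1 :=
  Real.rpow_lt_one_of_one_lt_of_neg (by exact_mod_cast p.prop.one_lt) (neg_neg_of_pos hs)

lemma eulerFactor_le (D : ℤ) {s : ℝ} (hs : 0 < s) (p : Primes) :
    (1 - ((p : ℕ) : ℝ) ^ (-(2 * s)))⁻¹ * (if (p : ℕ) = 2 then 1 + (2 : ℝ) ^ (-s) else 1) ≤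
      (1 - jacobiChar D p * ((p : ℕ) : ℝ) ^ (-s))⁻¹ * (1 - ((p : ℕ) : ℝ) ^ (-s))⁻¹ := by
  have hx0 : 0 ≤ ((p : ℕ) : ℝ) ^ (-s) := Real.rpow_nonneg (Nat.cast_nonneg _) _
  have hsq : ((p : ℕ) : ℝ) ^ (-(2 * s)) = (((p : ℕ) : ℝ) ^ (-s)) ^ 2 := by
    rw [show -(2 * s) = -s * 2 by ring, Real.rpow_mul (Nat.cast_nonneg _), Real.rpow_two]
  rw [hsq]
  split_ifs with h2
  · simp only [h2, Nat.cast_ofNat, jacobiChar_two, zero_mul, sub_zero, inv_one, one_mul]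
    exact (inv_one_sub_sq_mul_one_add (by positivity)).le
  · simpa using inv_one_sub_sq_le (abs_jacobiChar_le_one D p) hx0 (prime_rpow_neg_lt_one p hs)

lemma one_le_zeta {s : ℝ} (hs : 1 < s) : 1 ≤ zeta s := by
  simpa [zeta] using (Real.summable_nat_rpow.mpr (by linarith : -s < -1)).le_tsum 1
    fun m _ ↦ Real.rpow_nonneg m.cast_nonneg _

theorem stmt1 (s : ℝ) (hs : 1 < s) (D : ℤ) :
    (1 + 2 ^ (-s)) * (zeta (2 * s) / zeta s) ≤ zetaD D s := by
  have htwo : HasProd (fun p : Primes ↦ if (p : ℕ) = 2 then 1 + (2 : ℝ) ^ (-s) else 1)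
      (1 + 2 ^ (-s)) := by
    simpa using hasProd_single (β := Primes) ⟨2, Nat.prime_two⟩ fun p hp ↦
      if_neg fun h ↦ hp (Subtype.ext h)
  have hlhs := (hasProd_zeta (by linarith : 1 < 2 * s)).mul htwo
  have hrhs := (hasProd_zetaD D hs).mul (hasProd_zeta hs)
  have hlhs_nonneg (p : Primes) :
      0 ≤ (1 - ((p : ℕ) : ℝ) ^ (-(2 * s)))⁻¹ * (if (p : ℕ) = 2 then 1 + (2 : ℝ) ^ (-s) else 1) :=
    mul_nonneg (inv_nonneg.mpr (sub_nonneg.mpr (prime_rpow_neg_lt_one p (by linarith)).le))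
      (by split_ifs <;> positivity)
  have key : zeta (2 * s) * (1 + 2 ^ (-s)) ≤ zetaD D s * zeta s :=
    hasProd_le_hasProd_of_nonneg hlhs_nonneg (eulerFactor_le D (by linarith)) hlhs hrhs
  have hz : 0 < zeta s := by linarith [one_le_zeta hs]
  rw [mul_div_assoc', div_le_iff₀ hz]
  linarith
end

section
/- Let e be a nonzero integer with e ≡ 0 or 1 (mod 4) and let ψ_e(m) be the Kronecker symbol (e/m). Then the L-series L(ψ_e, 1) = ∑_{m=1}^∞ ψ_e(m)/m satisfies L(ψ_e, 1) ≤ 2 + log|e|. -/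
/-- The Kronecker symbol `(e/2)`. -/
def kronTwo (e : ℤ) : ℤ :=
  if e % 2 = 0 then 0 else if e % 8 = 1 ∨ e % 8 = 7 then 1 else -1

/-- The Kronecker symbol `(e/m)`, defined multiplicatively from the Jacobi symbol on the
odd part of `m` and `(e/2)` on the `2`-part of `m`. -/
def kron (e : ℤ) (m : ℕ) : ℤ :=
  kronTwo e ^ (m.factorization 2) * jacobiSym e (m / 2 ^ (m.factorization 2))

/-! For `e ≡ 0, 1 (mod 4)` the sequence `ψ(m) = (e/m)` is bounded by `1` and periodic modulo
`|e|` on positive integers (quadratic reciprocity). Since `∑ ψ(m)/m` converges, Kronecker's lemma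
gives `(ψ(1) + ⋯ + ψ(N))/N → 0`, so the sum over a period vanishes and every partial sum of `ψ`
is at most `|e|/2` in absolute value. Abel summation then bounds the tail beyond `|e|` by
`2 · (|e|/2)/(|e| + 1) < 1`, while the first `|e|` terms contribute at most
`H_{|e|} ≤ 1 + log |e|`. -/

open Finset Filter Topology

section Kronecker

variable {e : ℤ}

lemma kronTwo_eq_jacobiSym_two (h4 : e % 4 = 1) : kronTwo e = jacobiSym 2 e.natAbs := by
  have hodd : Odd e.natAbs := by rw [Nat.odd_iff]; omega
  rw [jacobiSym.at_two hodd, ZMod.χ₈_nat_eq_if_mod_eight, kronTwo,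
    if_neg (by omega : ¬ e % 2 = 0), if_neg (by omega : ¬ e.natAbs % 2 = 0)]
  by_cases h : e % 8 = 1 ∨ e % 8 = 7
  · rw [if_pos h, if_pos (by omega)]
  · rw [if_neg h, if_neg (by omega)]

lemma jacobiSym_eq_swap_natAbs (h4 : e % 4 = 1) {n : ℕ} (hn : Odd n) :
    jacobiSym e n = jacobiSym n e.natAbs := by
  rcases Int.natAbs_eq e with h | h
  · conv_lhs => rw [h]
    exact jacobiSym.quadratic_reciprocity_one_mod_four (by omega) hn
  · have hodd : Odd e.natAbs := by rw [Nat.odd_iff]; omega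
    conv_lhs => rw [h, neg_eq_neg_one_mul]
    rw [jacobiSym.mul_left, jacobiSym.at_neg_one hn]
    rcases Nat.odd_mod_four_iff.mp (Nat.odd_iff.mp hn) with h1 | h3
    · rw [ZMod.χ₄_nat_one_mod_four h1, jacobiSym.quadratic_reciprocity_one_mod_four' hodd h1,
        one_mul]
    · rw [ZMod.χ₄_nat_three_mod_four h3,
        jacobiSym.quadratic_reciprocity_three_mod_four (by omega) h3, neg_one_mul, neg_neg]

lemma kron_eq_jacobiSym_natAbs (h4 : e % 4 = 1) {m : ℕ} (hm : m ≠ 0) :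
    kron e m = jacobiSym m e.natAbs := by
  have hodd : Odd (m / 2 ^ m.factorization 2) :=
    Nat.odd_iff.mpr (Nat.two_dvd_ne_zero.mp (Nat.not_dvd_ordCompl Nat.prime_two hm))
  rw [kron, kronTwo_eq_jacobiSym_two h4, jacobiSym_eq_swap_natAbs h4 hodd,
    ← jacobiSym.pow_left, ← jacobiSym.mul_left]
  conv_rhs => rw [← Nat.ordProj_mul_ordCompl_eq_self m 2]
  push_cast
  rfl

lemma kron_of_even (he : Even e) {m : ℕ} (hm : Even m) (hm0 : m ≠ 0) : kron e m = 0 := by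
  have hv : m.factorization 2 ≠ 0 :=
    (Nat.Prime.factorization_pos_of_dvd Nat.prime_two hm0 hm.two_dvd).ne'
  rw [kron, kronTwo, if_pos (Int.even_iff.mp he), zero_pow hv, zero_mul]

lemma kron_of_odd (e : ℤ) {m : ℕ} (hm : Odd m) : kron e m = jacobiSym e m := by
  rw [kron, Nat.factorization_eq_zero_of_not_dvd hm.not_two_dvd_nat, pow_zero, pow_zero, one_mul,
    Nat.div_one]

lemma jacobiSym_add_natAbs_of_four_dvd (h4 : 4 ∣ e) {m : ℕ} (hm : Odd m) :
    jacobiSym e (m + e.natAbs) = jacobiSym e m := by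
  obtain ⟨d, rfl⟩ := h4
  have hodd : Odd (m + (4 * d).natAbs) := by
    rw [Int.natAbs_mul]
    exact hm.add_even (even_iff_two_dvd.mpr (dvd_mul_of_dvd_left (by norm_num) _))
  have hfour : ∀ {n : ℕ}, Odd n → jacobiSym (4 * d) n = jacobiSym d n := fun {n} hn => by
    have hcop : Int.gcd 2 n = 1 := by
      rw [show (2 : ℤ) = ((2 : ℕ) : ℤ) from rfl, Int.gcd_natCast_natCast]
      exact Nat.coprime_two_left.mpr hn
    rw [show (4 : ℤ) * d = 2 ^ 2 * d by norm_num, jacobiSym.mul_left, jacobiSym.sq_one' hcop,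
      one_mul]
  rw [hfour hm, hfour hodd, jacobiSym.mod_right d hm, jacobiSym.mod_right d hodd, Int.natAbs_mul,
    show (4 : ℤ).natAbs = 4 from rfl, Nat.add_mod_right]

lemma abs_kron_le_one (e : ℤ) (m : ℕ) : |kron e m| ≤ 1 := by
  have htwo : |kronTwo e| ≤ 1 := by unfold kronTwo; split_ifs <;> simp
  have hjac : |jacobiSym e (m / 2 ^ m.factorization 2)| ≤ 1 := by
    rcases jacobiSym.trichotomy e (m / 2 ^ m.factorization 2) with h | h | h <;> simp [h]
  rw [kron, abs_mul, abs_pow]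
  exact mul_le_one₀ (pow_le_one₀ (abs_nonneg _) htwo) (abs_nonneg _) hjac

lemma kron_add_natAbs (h4 : e % 4 = 0 ∨ e % 4 = 1) {m : ℕ} (hm : m ≠ 0) :
    kron e (m + e.natAbs) = kron e m := by
  rcases h4 with h4 | h4
  · have heven : Even e.natAbs := by rw [Nat.even_iff]; omega
    rcases Nat.even_or_odd m with hm2 | hm2
    · rw [kron_of_even (Int.natAbs_even.mp heven) hm2 hm,
        kron_of_even (Int.natAbs_even.mp heven) (hm2.add heven) (by omega)]
    · rw [kron_of_odd e hm2, kron_of_odd e (hm2.add_even heven),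
        jacobiSym_add_natAbs_of_four_dvd (Int.dvd_of_emod_eq_zero h4) hm2]
  · rw [kron_eq_jacobiSym_natAbs h4 hm, kron_eq_jacobiSym_natAbs h4 (by omega)]
    exact jacobiSym.mod_left' (by push_cast; exact Int.add_emod_right _ _)

-- `kron e 0 = 1`, so `kron e` itself is periodic only on the positive integers.
lemma kron_succ_periodic (h4 : e % 4 = 0 ∨ e % 4 = 1) :
    Function.Periodic (fun i : ℕ => (kron e (i + 1) : ℝ)) e.natAbs := fun i => by
  dsimp only
  rw [add_right_comm i, kron_add_natAbs h4 i.succ_ne_zero]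

end Kronecker

lemma sum_range_eq_mul_sum_range_div_succ_sub (f : ℕ → ℝ) (N : ℕ) :
    ∑ i ∈ range N, f i =
      N * ∑ i ∈ range N, f i / (i + 1) - ∑ n ∈ range N, ∑ i ∈ range n, f i / (i + 1) := by
  induction N with
  | zero => simp
  | succ N ih =>
    rw [sum_range_succ, ih, sum_range_succ (fun n => ∑ i ∈ range n, f i / (i + 1)),
      sum_range_succ (fun i => f i / (i + 1))]
    push_cast
    field_simp
    ring

lemma tendsto_sum_range_div_zero_of_tendsto_sum_range_div_succ {f : ℕ → ℝ} {L : ℝ}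
    (h : Tendsto (fun N : ℕ => ∑ i ∈ range N, f i / (i + 1)) atTop (𝓝 L)) :
    Tendsto (fun N : ℕ => (∑ i ∈ range N, f i) / N) atTop (𝓝 0) := by
  have hcesaro := h.sub h.cesaro
  rw [sub_self] at hcesaro
  refine hcesaro.congr' ?_
  filter_upwards [eventually_ne_atTop 0] with N hN
  rw [sum_range_eq_mul_sum_range_div_succ_sub f N, sub_div,
    mul_div_cancel_left₀ _ (by exact_mod_cast hN), inv_mul_eq_div]

section PeriodicSums

variable {f : ℕ → ℝ} {q : ℕ}

lemma Function.Periodic.sum_range_mul (hf : Function.Periodic f q) (k : ℕ) :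
    ∑ i ∈ range (k * q), f i = k * ∑ i ∈ range q, f i := by
  have hshift : (fun i => f (q + i)) = f := funext fun i => by rw [add_comm]; exact hf i
  induction k with
  | zero => simp
  | succ k ih =>
    rw [add_one_mul, add_comm, sum_range_add, hshift, ih]
    push_cast
    ring

lemma Function.Periodic.abs_sum_range_le (hf : Function.Periodic f q) (hq : 0 < q)
    (hsum : ∑ i ∈ range q, f i = 0) {C : ℝ} (hC : ∀ i, |f i| ≤ C) (N : ℕ) :
    |∑ i ∈ range N, f i| ≤ C * q / 2 := by
  have hshift : (fun i => f (N / q * q + i)) = f :=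
    funext fun i => by rw [add_comm]; exact hf.nat_mul _ i
  rw [← Nat.div_add_mod' N q, sum_range_add, hf.sum_range_mul, hsum, mul_zero, zero_add, hshift]
  set r := N % q
  have hr : r ≤ q := (Nat.mod_lt N hq).le
  have hsplit := sum_range_add_sum_Ico f hr
  rw [hsum] at hsplit
  have head : |∑ i ∈ range r, f i| ≤ r * C := by
    simpa using abs_sum_le_sum_abs f (range r) |>.trans (sum_le_sum fun i _ => hC i)
  have tail : |∑ i ∈ Ico r q, f i| ≤ (q - r) * C := by
    simpa [Nat.cast_sub hr] using
      abs_sum_le_sum_abs f (Ico r q) |>.trans (sum_le_sum fun i _ => hC i)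
  rw [eq_neg_of_add_eq_zero_left hsplit, abs_neg] at head ⊢
  linarith

lemma Function.Periodic.sum_range_eq_zero_of_tendsto (hf : Function.Periodic f q)
    (hq : q ≠ 0) {L : ℝ} (h : Tendsto (fun N : ℕ => ∑ i ∈ range N, f i / (i + 1)) atTop (𝓝 L)) :
    ∑ i ∈ range q, f i = 0 := by
  have hmul : Tendsto (fun k : ℕ => k * q) atTop atTop :=
    tendsto_id.atTop_mul_const' (Nat.pos_of_ne_zero hq)
  have hlim := (tendsto_sum_range_div_zero_of_tendsto_sum_range_div_succ h).comp hmul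
  have hconst : Tendsto (fun _ : ℕ => (∑ i ∈ range q, f i) / q) atTop (𝓝 0) := by
    refine hlim.congr' ?_
    filter_upwards [eventually_ne_atTop 0] with k hk
    simp only [Function.comp_apply, hf.sum_range_mul]
    push_cast
    field_simp
  simpa [hq] using tendsto_nhds_unique tendsto_const_nhds hconst

end PeriodicSums

lemma abs_sum_Ico_div_succ_le {f : ℕ → ℝ} {B : ℝ} (hB : ∀ N, |∑ i ∈ range N, f i| ≤ B)
    {n N : ℕ} (hnN : n ≤ N) : |∑ i ∈ Ico n N, f i / (i + 1)| ≤ 2 * B / (n + 1) := by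
  rcases hnN.eq_or_lt with rfl | hlt
  · have := (abs_nonneg _).trans (hB 0)
    simp only [Ico_self, sum_empty, abs_zero]
    positivity
  set w : ℕ → ℝ := fun i => (i + 1 : ℝ)⁻¹
  set S : ℕ → ℝ := fun k => ∑ i ∈ range k, f i
  have hw₀ : ∀ i, 0 ≤ w i := fun i => by positivity
  have hw : ∀ i, w (i + 1) ≤ w i := fun i => by simp only [w]; gcongr; linarith
  have hparts : ∑ i ∈ Ico n N, f i / (i + 1) =
      w (N - 1) * S N - w n * S n - ∑ i ∈ Ico n (N - 1), (w (i + 1) - w i) * S (i + 1) := by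
    simp only [div_eq_inv_mul]
    exact sum_Ico_by_parts w f hlt
  have htele : ∑ i ∈ Ico n (N - 1), (w i - w (i + 1)) = w n - w (N - 1) := by
    rw [← neg_sub (w (N - 1)), ← sum_Ico_sub w (Nat.le_sub_one_of_lt hlt), ← sum_neg_distrib]
    simp only [neg_sub]
  have hmiddle : |∑ i ∈ Ico n (N - 1), (w (i + 1) - w i) * S (i + 1)| ≤ (w n - w (N - 1)) * B :=
    calc _ ≤ ∑ i ∈ Ico n (N - 1), |(w (i + 1) - w i) * S (i + 1)| := abs_sum_le_sum_abs _ _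
      _ ≤ ∑ i ∈ Ico n (N - 1), (w i - w (i + 1)) * B := sum_le_sum fun i _ => by
          rw [abs_mul, abs_sub_comm, abs_of_nonneg (sub_nonneg.2 (hw i))]
          exact mul_le_mul_of_nonneg_left (hB _) (sub_nonneg.2 (hw i))
      _ = (w n - w (N - 1)) * B := by rw [← sum_mul, htele]
  rw [hparts]
  calc _ ≤ |w (N - 1) * S N| + |w n * S n|
          + |∑ i ∈ Ico n (N - 1), (w (i + 1) - w i) * S (i + 1)| :=
        (abs_sub _ _).trans (add_le_add_left (abs_sub _ _) _)
    _ ≤ w (N - 1) * B + w n * B + (w n - w (N - 1)) * B := by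
        rw [abs_mul, abs_mul, abs_of_nonneg (hw₀ _), abs_of_nonneg (hw₀ _)]
        gcongr
        exacts [hB N, hB n]
    _ = 2 * B / (n + 1) := by simp only [w]; ring

lemma sum_range_div_succ_le_harmonic {f : ℕ → ℝ} (hf : ∀ i, f i ≤ 1) (n : ℕ) :
    ∑ i ∈ range n, f i / (i + 1) ≤ harmonic n := by
  rw [harmonic]
  push_cast
  refine sum_le_sum fun i _ => ?_
  rw [div_eq_mul_inv]
  exact mul_le_of_le_one_left (by positivity) (hf i)

theorem stmt2_general (e : ℤ) (he : e ≠ 0) (h4 : e % 4 = 0 ∨ e % 4 = 1) (L : ℝ)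
    (hL : Filter.Tendsto (fun N : ℕ => ∑ m ∈ Finset.range N, (kron e (m + 1) : ℝ) / (m + 1))
      Filter.atTop (nhds L)) :
    L ≤ 2 + Real.log |(e : ℝ)| := by
  set ψ : ℕ → ℝ := fun i => kron e (i + 1)
  set q := e.natAbs
  have hq : 0 < q := Int.natAbs_pos.mpr he
  have hψ : Function.Periodic ψ q := kron_succ_periodic h4
  have hψ_abs : ∀ i, |ψ i| ≤ 1 := fun i => by
    simp only [ψ, ← Int.cast_abs]
    exact_mod_cast abs_kron_le_one e (i + 1)
  have hsum := hψ.sum_range_eq_zero_of_tendsto hq.ne' hL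
  have hpartial := hψ.abs_sum_range_le hq hsum hψ_abs
  have hL_le : L ≤ ∑ i ∈ range q, ψ i / (i + 1) + 1 := by
    refine le_of_tendsto hL (eventually_atTop.2 ⟨q, fun N hN => ?_⟩)
    rw [← sum_range_add_sum_Ico _ hN]
    have htail := (abs_le.mp (abs_sum_Ico_div_succ_le hpartial hN)).2
    have hq_div : 2 * (1 * q / 2) / (q + 1 : ℝ) ≤ 1 := by
      rw [div_le_one (by positivity)]
      linarith
    linarith
  have hharmonic := sum_range_div_succ_le_harmonic (fun i => (abs_le.mp (hψ_abs i)).2) q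
  have hq_abs : |(e : ℝ)| = q := ((Nat.cast_natAbs e).trans Int.cast_abs).symm
  rw [hq_abs]
  linarith [harmonic_le_one_add_log q]

theorem stmt2 (e : ℤ) (he : e ≠ 0) (h4 : e % 4 = 0 ∨ e % 4 = 1)
    (hconv : e < 0 ∨ ¬ IsSquare e) (L : ℝ)
    (hL : Filter.Tendsto (fun N : ℕ => ∑ m ∈ Finset.range N, (kron e (m + 1) : ℝ) / (m + 1))
      Filter.atTop (nhds L)) :
    L ≤ 2 + Real.log |(e : ℝ)| :=
  stmt2_general e he h4 L hL
end

section
/- Let L and L' be positive definite integral lattices (finitely generated free ℤ-modules with positive definite integral symmetric bilinear form). If the orthogonal direct sums [1] ⊕ L and [1] ⊕ L' are isomorphic as lattices, then L and L' are isomorphic as lattices. (Here [1] denotes the rank-1 lattice with Gram matrix (1).) -/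
/-!
An isometry `e : [1] ⊕ L ≅ [1] ⊕ L'` sends the unit vector `(1, 0)` to a vector `v = (a, n)` with
`a² + n·n = 1`. By positive definiteness either `v = (±1, 0)`, or `a = 0` and `n·n = 1`; in the
latter case `(1, 0) - v` is a root and the reflection in it moves `v` to `(1, 0)`. So after
composing with `-1` or with that reflection, `e` fixes `(1, 0)`, hence maps its orthogonal
complement `L` isometrically onto `L'`.
-/

namespace LinearEquiv

variable {R P M N : Type*} [Semiring R] [AddCommMonoid P] [Module R P]
  [AddCommMonoid M] [Module R M] [AddCommMonoid N] [Module R N]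

def restrictSnd (e : (P × M) ≃ₗ[R] P × N) (he : ∀ p, (e p).1 = p.1) : M ≃ₗ[R] N := by
  have he' (q : P × N) : (e.symm q).1 = q.1 := by rw [← he, apply_symm_apply]
  refine .ofLinearMap (.snd R P N ∘ₗ e.toLinearMap ∘ₗ .inr R P M)
    (.snd R P M ∘ₗ e.symm.toLinearMap ∘ₗ .inr R P N) ?_ ?_
  · ext y
    have h : e.symm (0, y) = (0, (e.symm (0, y)).2) := Prod.ext (he' _) rfl
    simpa using congr_arg (Prod.snd ∘ e) h.symm
  · ext x
    have h : e (0, x) = (0, (e (0, x)).2) := Prod.ext (he _) rfl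
    simpa using congr_arg (Prod.snd ∘ e.symm) h.symm

lemma apply_zero_restrictSnd (e : (P × M) ≃ₗ[R] P × N) (he : ∀ p, (e p).1 = p.1) (x : M) :
    e (0, x) = (0, e.restrictSnd he x) :=
  Prod.ext (he (0, x)) rfl

end LinearEquiv

namespace LinearMap.BilinForm

section CommRing

variable {R M N : Type*} [CommRing R] [AddCommGroup M] [Module R M] [AddCommGroup N] [Module R N]

lemma isOrthogonal_reflection {B : LinearMap.BilinForm R M} (hB : B.IsSymm) {u : M}
    (hu : B u u = 2) :
    B.IsOrthogonal (Module.reflection hu) := by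
  intro x y
  simp only [Module.reflection_apply, map_sub, map_smul, LinearMap.sub_apply,
    LinearMap.smul_apply, smul_eq_mul, hu, hB.eq u x]
  ring

/-- The orthogonal sum `[1] ⊕ B` on `R × M`. -/
def unitSum (B : LinearMap.BilinForm R M) : LinearMap.BilinForm R (R × M) :=
  (LinearMap.mul R R).compl₁₂ (fst R R M) (fst R R M) + B.compl₁₂ (snd R R M) (snd R R M)

@[simp]
lemma unitSum_apply (B : LinearMap.BilinForm R M) (p q : R × M) :
    unitSum B p q = p.1 * q.1 + B p.2 q.2 :=
  rfl

lemma IsSymm.unitSum {B : LinearMap.BilinForm R M} (hB : B.IsSymm) : (unitSum B).IsSymm :=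
  ⟨fun p q => by simp [hB.eq p.2, mul_comm]⟩

lemma exists_isometry_of_apply_one_zero (B : LinearMap.BilinForm R M)
    (C : LinearMap.BilinForm R N)
    (e : (R × M) ≃ₗ[R] R × N) (he : ∀ p q, unitSum C (e p) (e q) = unitSum B p q)
    (h1 : e (1, 0) = (1, 0)) : ∃ f : M ≃ₗ[R] N, ∀ x y, C (f x) (f y) = B x y := by
  have hfst (p : R × M) : (e p).1 = p.1 := by simpa [h1] using he (1, 0) p
  refine ⟨e.restrictSnd hfst, fun x y => ?_⟩
  simpa [e.apply_zero_restrictSnd hfst] using he (0, x) (0, y)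

end CommRing

variable {N : Type*} [AddCommGroup N]

lemma unitSum_self_eq_one_cases {C : LinearMap.BilinForm ℤ N} (hC : ∀ x, x ≠ 0 → 0 < C x x)
    {v : ℤ × N} (hv : unitSum C v v = 1) : v = (1, 0) ∨ v = (-1, 0) ∨ v.1 = 0 ∧ C v.2 v.2 = 1 := by
  obtain ⟨a, n⟩ := v
  rw [unitSum_apply] at hv
  rcases eq_or_ne n 0 with rfl | hn
  · have : a * a = 1 := by simpa using hv
    rcases mul_self_eq_one_iff.mp this with rfl | rfl <;> simp
  · have := hC n hn
    right; right
    constructor <;> nlinarith [mul_self_nonneg a]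

lemma exists_isOrthogonal_apply_eq_one_zero {C : LinearMap.BilinForm ℤ N} (hCs : C.IsSymm)
    (hC : ∀ x, x ≠ 0 → 0 < C x x) {v : ℤ × N} (hv : unitSum C v v = 1) :
    ∃ σ : (ℤ × N) ≃ₗ[ℤ] ℤ × N, (unitSum C).IsOrthogonal σ ∧ σ v = (1, 0) := by
  rcases unitSum_self_eq_one_cases hC hv with rfl | rfl | ⟨ha, hn⟩
  · exact ⟨.refl ℤ _, fun _ _ => rfl, rfl⟩
  · refine ⟨.neg ℤ, fun p q => ?_, by simp⟩
    simp only [LinearEquiv.neg_apply, map_neg, LinearMap.neg_apply, neg_neg]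
  · have hu : unitSum C (v - (1, 0)) (v - (1, 0)) = 2 := by
      simp [ha, hn]
    refine ⟨Module.reflection hu, isOrthogonal_reflection hCs.unitSum hu, ?_⟩
    simp [Module.reflection_apply, ha, hn]

end LinearMap.BilinForm

theorem stmt4_general {M N : Type*} [AddCommGroup M] [AddCommGroup N]
    (B : M →ₗ[ℤ] M →ₗ[ℤ] ℤ) (C : N →ₗ[ℤ] N →ₗ[ℤ] ℤ)
    (hCs : ∀ x y, C x y = C y x)
    (hCpos : ∀ x : N, x ≠ 0 → 0 < C x x)
    (e : (ℤ × M) ≃ₗ[ℤ] ℤ × N)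
    (he : ∀ p q : ℤ × M, p.1 * q.1 + B p.2 q.2 = (e p).1 * (e q).1 + C (e p).2 (e q).2) :
    ∃ f : M ≃ₗ[ℤ] N, ∀ x y : M, C (f x) (f y) = B x y := by
  obtain ⟨σ, hσ, hσe⟩ := LinearMap.BilinForm.exists_isOrthogonal_apply_eq_one_zero ⟨hCs⟩ hCpos
    (v := e (1, 0)) (by simpa using (he (1, 0) (1, 0)).symm)
  refine LinearMap.BilinForm.exists_isometry_of_apply_one_zero B C (e.trans σ)
    (fun p q => ?_) hσe
  simpa [hσ _ _] using (he p q).symm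

/-- Cancellation of a unimodular rank-one summand `[1]` for positive definite integral
lattices: if `[1] ⊕ L ≅ [1] ⊕ L'` then `L ≅ L'`. -/
theorem stmt4 {M N : Type*} [AddCommGroup M] [Module.Free ℤ M] [Module.Finite ℤ M]
    [AddCommGroup N] [Module.Free ℤ N] [Module.Finite ℤ N]
    (B : M →ₗ[ℤ] M →ₗ[ℤ] ℤ) (C : N →ₗ[ℤ] N →ₗ[ℤ] ℤ)
    (hBs : ∀ x y, B x y = B y x) (hCs : ∀ x y, C x y = C y x)
    (hBpos : ∀ x : M, x ≠ 0 → 0 < B x x) (hCpos : ∀ x : N, x ≠ 0 → 0 < C x x)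
    (e : (ℤ × M) ≃ₗ[ℤ] ℤ × N)
    (he : ∀ p q : ℤ × M, p.1 * q.1 + B p.2 q.2 = (e p).1 * (e q).1 + C (e p).2 (e q).2) :
    ∃ f : M ≃ₗ[ℤ] N, ∀ x y : M, C (f x) (f y) = B x y :=
  stmt4_general B C hCs hCpos e he
end

section
/- Let q: A → ℚ/2ℤ be a finite quadratic form on a finite abelian group A (i.e., q(na) = n²q(a) and (a,b) ↦ (q(a+b) − q(a) − q(b))/2 is ℚ/ℤ-bilinear). Then the 2-length ℓ₂(A) (the minimal number of generators of the 2-primary part of A) is congruent modulo 2 to the signature of q modulo 8, in the sense that if q is the discriminant form of an even lattice of signature (s₊, s₋), then ℓ₂(A) ≡ s₊ − s₋ (mod 2). -/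
/-!
Write `A = ℤⁿ/Gℤⁿ` and `Ḡ` for `G` reduced mod 2. Since `G` is injective, the 2-torsion of `A` has
the same order as `ker Ḡ`, so `ℓ₂(A) = dim ker Ḡ`. Evenness of `L` makes `x ↦ xᵀḠx` vanish
identically, i.e. `Ḡ` is an alternating form over `𝔽₂`, and alternating forms have even rank
(split off a hyperbolic plane and induct). As `det G ≠ 0`, the real diagonalisation of `G` has no
zero entries, so `n = s₊ + s₋`, and `ℓ₂(A) ≡ n ≡ s₊ - s₋ (mod 2)`.
-/

/-- The 2-length of a finite abelian group: the minimal number of generators of its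
Sylow 2-subgroup, computed as the 𝔽₂-dimension of the 2-torsion subgroup. -/
noncomputable def ell2 (G : Type*) [AddCommGroup G] : ℕ :=
  (Nat.card {x : G // x + x = 0}).factorization 2

open Module LinearMap Matrix

namespace LinearMap.BilinForm

variable {K V : Type*} [Field K] [AddCommGroup V] [Module K V] {B : LinearMap.BilinForm K V}

lemma IsAlt.eq_zero_of_apply_smul_add_smul (hB : B.IsAlt) {u v : V} (huv : B u v ≠ 0)
    {s t : K} (hu : B (s • u + t • v) u = 0) (hv : B (s • u + t • v) v = 0) :
    s = 0 ∧ t = 0 := by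
  simp only [map_add, map_smul, LinearMap.add_apply, LinearMap.smul_apply, hB.self_eq_zero,
    smul_eq_mul, ← hB.neg_eq u v] at hu hv
  simp_all

lemma IsAlt.linearIndependent_pair (hB : B.IsAlt) {u v : V} (huv : B u v ≠ 0) :
    LinearIndependent K ![u, v] :=
  LinearIndependent.pair_iff.mpr fun s t h ↦
    hB.eq_zero_of_apply_smul_add_smul huv (by simp [h]) (by simp [h])

lemma IsAlt.nondegenerate_restrict_span_pair (hB : B.IsAlt) {u v : V} (huv : B u v ≠ 0) :
    (B.restrict (Submodule.span K (Set.range ![u, v]))).Nondegenerate := by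
  have hrefl : (B.restrict (Submodule.span K (Set.range ![u, v]))).IsRefl :=
    fun x y ↦ hB.isRefl x y
  refine hrefl.nondegenerate_iff_separatingLeft.mpr fun x hx ↦ ?_
  obtain ⟨c, hc⟩ := Submodule.mem_span_range_iff_exists_fun K |>.mp x.2
  simp only [Fin.sum_univ_two, Matrix.cons_val_zero, Matrix.cons_val_one] at hc
  have := hB.eq_zero_of_apply_smul_add_smul huv (s := c 0) (t := c 1)
    (by simpa [hc] using hx ⟨u, Submodule.subset_span ⟨0, rfl⟩⟩)
    (by simpa [hc] using hx ⟨v, Submodule.subset_span ⟨1, rfl⟩⟩)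
  ext
  simp [← hc, this]

theorem IsAlt.even_finrank_add_finrank_ker [FiniteDimensional K V] (hB : B.IsAlt) :
    Even (finrank K V + finrank K (ker B)) := by
  induction h : finrank K V using Nat.strong_induction_on generalizing V with
  | _ N ih =>
  by_cases hB0 : B = 0
  · rw [hB0, LinearMap.ker_zero, finrank_top, h]
    exact ⟨N, rfl⟩
  obtain ⟨u, v, huv⟩ : ∃ u v, B u v ≠ 0 := by
    by_contra! h
    exact hB0 (ext₂ fun u v ↦ by simp [h])
  set W := Submodule.span K (Set.range ![u, v])
  have hW : finrank K W = 2 := by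
    simpa using finrank_span_eq_card (hB.linearIndependent_pair huv)
  have hcompl : IsCompl W (B.orthogonal W) :=
    isCompl_orthogonal_of_restrict_nondegenerate hB.isRefl
      (hB.nondegenerate_restrict_span_pair huv)
  have hker_le : ker B ≤ B.orthogonal W := fun x hx y _ ↦ by
    simp [hB.isRefl.eq_iff.mp (by simp [mem_ker.mp hx] : B x y = 0)]
  have hker : ker (B.restrict (B.orthogonal W)) = (ker B).comap (B.orthogonal W).subtype :=
    ker_restrict_eq_of_codisjoint hcompl.symm.codisjoint fun x hx y hy ↦
      hB.isRefl.eq_iff.mp (hx y hy)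
  have hsum := Submodule.finrank_add_eq_of_isCompl hcompl
  obtain ⟨m, hm⟩ := ih _ (by omega) (B := B.restrict (B.orthogonal W)) (fun x ↦ hB x) rfl
  rw [hker, (Submodule.comapSubtypeEquivOfLe hker_le).finrank_eq] at hm
  exact ⟨m + 1, by omega⟩

end LinearMap.BilinForm

theorem Matrix.even_card_add_finrank_ker_toLin' {ι K : Type*} [Fintype ι] [DecidableEq ι]
    [Field K] (M : Matrix ι ι K) (hM : ∀ x, x ⬝ᵥ M *ᵥ x = 0) :
    Even (Fintype.card ι + finrank K (ker (toLin' M))) := by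
  -- the transpose makes the left kernel of `B` equal to `ker M`
  set B : LinearMap.BilinForm K (ι → K) := toLinearMap₂' K Mᵀ
  have hB (x y : ι → K) : B x y = (M *ᵥ x) ⬝ᵥ y := by
    rw [toLinearMap₂'_apply', dotProduct_mulVec, vecMul_transpose]
  have hker : ker B = ker (toLin' M) := by
    ext x
    simp only [mem_ker, toLin'_apply, ← dotProduct_eq_zero_iff, ← hB, LinearMap.ext_iff,
      LinearMap.zero_apply]
  have halt : B.IsAlt := fun x ↦ by
    rw [hB, dotProduct_comm, hM]
  have := halt.even_finrank_add_finrank_ker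
  rwa [finrank_fintype_fun_eq_card, hker] at this

theorem LinearMap.natCard_range_eq_of_ker_eq {R M N P : Type*} [Ring R] [AddCommGroup M]
    [AddCommGroup N] [AddCommGroup P] [Module R M] [Module R N] [Module R P]
    (f : M →ₗ[R] N) (g : M →ₗ[R] P) (h : ker f = ker g) :
    Nat.card (range f) = Nat.card (range g) :=
  Nat.card_congr (f.quotKerEquivRange.symm.trans
    ((Submodule.quotEquivOfEq _ _ h).trans g.quotKerEquivRange)).toEquiv

namespace Matrix

def reduceModTwo (n : Type*) : (n → ℤ) →ₗ[ℤ] n → ZMod 2 :=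
  (Int.castAddHom (ZMod 2)).toIntLinearMap.compLeft n

variable {m n : Type*}

lemma reduceModTwo_surjective : Function.Surjective (reduceModTwo n) :=
  fun v ↦ ⟨fun i ↦ (v i).cast, funext fun i ↦ ZMod.intCast_zmod_cast (v i)⟩

lemma reduceModTwo_eq_zero_iff {x : n → ℤ} : reduceModTwo n x = 0 ↔ ∃ z, (2 : ℤ) • z = x := by
  constructor
  · intro h
    have (i : n) : (2 : ℤ) ∣ x i := (ZMod.intCast_zmod_eq_zero_iff_dvd _ 2).mp (congrFun h i)
    choose z hz using this
    exact ⟨z, funext fun i ↦ by simp [hz i]⟩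
  · rintro ⟨z, rfl⟩
    ext i
    simp [reduceModTwo, show (2 : ZMod 2) = 0 from rfl]

lemma reduceModTwo_mulVec [Fintype n] (G : Matrix m n ℤ) (y : n → ℤ) :
    reduceModTwo m (G *ᵥ y) = G.map (fun z : ℤ => (z : ZMod 2)) *ᵥ reduceModTwo n y :=
  funext fun i ↦ RingHom.map_mulVec (Int.castRingHom (ZMod 2)) G y i

theorem dotProduct_map_mulVec_self_eq_zero_of_even [Fintype n] (G : Matrix n n ℤ)
    (heven : ∀ x, 2 ∣ x ⬝ᵥ G *ᵥ x) (v : n → ZMod 2) :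
    v ⬝ᵥ G.map (fun z : ℤ => (z : ZMod 2)) *ᵥ v = 0 := by
  obtain ⟨x, rfl⟩ := reduceModTwo_surjective v
  rw [← reduceModTwo_mulVec]
  exact (RingHom.map_dotProduct (Int.castRingHom (ZMod 2)) x (G *ᵥ x)).symm.trans
    ((ZMod.intCast_zmod_eq_zero_iff_dvd _ 2).mpr (heven x))

variable [Fintype n] [DecidableEq n] (G : Matrix m n ℤ)

def twoMulEqMulVec : Submodule ℤ ((m → ℤ) × (n → ℤ)) :=
  ker ((2 : ℤ) • fst ℤ _ _ - toLin' G ∘ₗ snd ℤ _ _)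

lemma mem_twoMulEqMulVec {p : (m → ℤ) × (n → ℤ)} :
    p ∈ twoMulEqMulVec G ↔ (2 : ℤ) • p.1 = G *ᵥ p.2 := by
  simp [twoMulEqMulVec, sub_eq_zero]

lemma reduceModTwo_eq_zero_iff_mem_range (hG : Function.Injective G.mulVec) {x : m → ℤ}
    {y : n → ℤ} (hxy : (2 : ℤ) • x = G *ᵥ y) : reduceModTwo n y = 0 ↔ x ∈ range (toLin' G) := by
  rw [reduceModTwo_eq_zero_iff]
  constructor
  · rintro ⟨z, rfl⟩
    exact ⟨z, smul_right_injective _ (two_ne_zero (α := ℤ))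
      (show (2 : ℤ) • toLin' G z = (2 : ℤ) • x by rw [hxy, toLin'_apply, mulVec_smul])⟩
  · rintro ⟨z, rfl⟩
    exact ⟨z, hG (by rw [mulVec_smul, ← toLin'_apply, hxy])⟩

/-- Both sides are quotients of `twoMulEqMulVec G`, via `(x, y) ↦ [x]` and `(x, y) ↦ y mod 2`,
and injectivity of `G` makes the two kernels coincide. -/
theorem natCard_twoTorsion_cokernel (hG : Function.Injective G.mulVec) :
    Nat.card {t : (m → ℤ) ⧸ range (toLin' G) // t + t = 0} =
      Nat.card (ker (toLin' (G.map fun z : ℤ => (z : ZMod 2)))) := by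
  set S := twoMulEqMulVec G
  let f := reduceModTwo n ∘ₗ snd ℤ _ _ ∘ₗ S.subtype
  let g := (range (toLin' G)).mkQ ∘ₗ fst ℤ _ _ ∘ₗ S.subtype
  have hf (v : n → ZMod 2) :
      v ∈ range f ↔ v ∈ ker (toLin' (G.map fun z : ℤ => (z : ZMod 2))) := by
    rw [mem_ker, toLin'_apply]
    constructor
    · rintro ⟨⟨⟨x, y⟩, hp⟩, rfl⟩
      replace hp : (2 : ℤ) • x = G *ᵥ y := (mem_twoMulEqMulVec G).mp hp
      exact (reduceModTwo_mulVec G y).symm.trans (reduceModTwo_eq_zero_iff.mpr ⟨x, hp⟩)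
    · intro hv
      obtain ⟨y, rfl⟩ := reduceModTwo_surjective v
      obtain ⟨x, hx⟩ := reduceModTwo_eq_zero_iff.mp ((reduceModTwo_mulVec G y).trans hv)
      exact ⟨⟨(x, y), (mem_twoMulEqMulVec G).mpr hx⟩, rfl⟩
  have hg (t : (m → ℤ) ⧸ range (toLin' G)) : t ∈ range g ↔ t + t = 0 := by
    constructor
    · rintro ⟨⟨⟨x, y⟩, hp⟩, rfl⟩
      replace hp : (2 : ℤ) • x = G *ᵥ y := (mem_twoMulEqMulVec G).mp hp
      show Submodule.Quotient.mk x + Submodule.Quotient.mk x = 0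
      rw [← Submodule.Quotient.mk_add, Submodule.Quotient.mk_eq_zero, ← two_smul ℤ, hp]
      exact ⟨y, rfl⟩
    · intro ht
      obtain ⟨x, rfl⟩ := Submodule.Quotient.mk_surjective _ t
      rw [← Submodule.Quotient.mk_add, Submodule.Quotient.mk_eq_zero] at ht
      obtain ⟨y, hy⟩ := ht
      exact ⟨⟨(x, y), by rw [mem_twoMulEqMulVec, two_smul, ← hy, toLin'_apply]⟩, rfl⟩
  have hker : ker f = ker g := by
    ext ⟨⟨x, y⟩, hp⟩
    change reduceModTwo n y = 0 ↔ Submodule.Quotient.mk (p := range (toLin' G)) x = 0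
    rw [Submodule.Quotient.mk_eq_zero]
    exact reduceModTwo_eq_zero_iff_mem_range G hG ((mem_twoMulEqMulVec G).mp hp)
  calc Nat.card {t : (m → ℤ) ⧸ range (toLin' G) // t + t = 0}
      = Nat.card (range g) := Nat.card_congr (Equiv.subtypeEquivRight hg).symm
    _ = Nat.card (range f) := (natCard_range_eq_of_ker_eq f g hker).symm
    _ = _ := Nat.card_congr (Equiv.subtypeEquivRight hf)

theorem ell2_cokernel_eq_finrank_ker (hG : Function.Injective G.mulVec) :
    ell2 ((m → ℤ) ⧸ range (toLin' G)) =
      finrank (ZMod 2) (ker (toLin' (G.map fun z : ℤ => (z : ZMod 2)))) := by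
  rw [ell2, natCard_twoTorsion_cokernel G hG, Module.natCard_eq_pow_finrank (K := ZMod 2),
    Nat.card_zmod, Nat.prime_two.factorization_pow, Finsupp.single_eq_same]

theorem ne_zero_of_transpose_mul_mul_eq_diagonal {R : Type*} [CommRing R] [IsDomain R]
    {A P : Matrix n n R} {d : n → R} (hA : A.det ≠ 0) (hP : P.det ≠ 0)
    (h : Pᵀ * A * P = diagonal d) (i : n) : d i ≠ 0 := by
  have : ∏ i, d i ≠ 0 := by
    rw [← det_diagonal, ← h, det_mul, det_mul, det_transpose]
    exact mul_ne_zero (mul_ne_zero hP hA) hP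
  exact Finset.prod_ne_zero_iff.mp this i (Finset.mem_univ i)

end Matrix

theorem card_pos_add_card_neg_eq_card {ι α : Type*} [Finite ι] [LinearOrder α] [Zero α]
    {d : ι → α} (hd : ∀ i, d i ≠ 0) :
    Nat.card {i // 0 < d i} + Nat.card {i // d i < 0} = Nat.card ι := by
  have e : {i // d i < 0} ≃ {i // ¬ 0 < d i} :=
    Equiv.subtypeEquivRight fun i ↦ by rw [not_lt, le_iff_lt_or_eq, or_iff_left (hd i)]
  rw [← Nat.card_sum, Nat.card_congr ((Equiv.sumCongr (Equiv.refl _) e).trans (Equiv.sumCompl _))]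

theorem stmt7_general (n sp sm : ℕ) (G : Matrix (Fin n) (Fin n) ℤ)
    (heven : ∀ x : Fin n → ℤ, 2 ∣ dotProduct x (G.mulVec x))
    (hdet : G.det ≠ 0)
    (P : Matrix (Fin n) (Fin n) ℝ) (hP : IsUnit P.det) (d : Fin n → ℝ)
    (hdiag : P.transpose * (G.map fun z : ℤ => (z : ℝ)) * P = Matrix.diagonal d)
    (hpos : Nat.card {i // 0 < d i} = sp) (hneg : Nat.card {i // d i < 0} = sm) :
    Int.ModEq 2 (ell2 ((Fin n → ℤ) ⧸ LinearMap.range (Matrix.toLin' G)) : ℤ)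
      ((sp : ℤ) - (sm : ℤ)) := by
  have hsig : sp + sm = n := by
    rw [← hpos, ← hneg, card_pos_add_card_neg_eq_card, Nat.card_fin]
    refine ne_zero_of_transpose_mul_mul_eq_diagonal ?_ hP.ne_zero hdiag
    rwa [← Int.cast_det, Int.cast_ne_zero]
  obtain ⟨k, hk⟩ := (G.map fun z : ℤ => (z : ZMod 2)).even_card_add_finrank_ker_toLin'
    (G.dotProduct_map_mulVec_self_eq_zero_of_even heven)
  rw [Fintype.card_fin] at hk
  rw [Int.ModEq, ell2_cokernel_eq_finrank_ker G (mulVec_injective_of_det_ne_zero hdet)]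
  omega

/-- For an even nondegenerate integral lattice of signature `(sp, sm)` (given by a Gram
matrix `G` that diagonalizes over `ℝ` with `sp` positive and `sm` negative entries),
the 2-length of the discriminant group `L^∨/L ≅ ℤⁿ/Gℤⁿ` is congruent to `sp - sm` mod 2. -/
theorem stmt7 (n sp sm : ℕ) (G : Matrix (Fin n) (Fin n) ℤ)
    (hsymm : G.IsSymm)
    (heven : ∀ x : Fin n → ℤ, 2 ∣ dotProduct x (G.mulVec x))
    (hdet : G.det ≠ 0)
    (P : Matrix (Fin n) (Fin n) ℝ) (hP : IsUnit P.det) (d : Fin n → ℝ)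
    (hdiag : P.transpose * (G.map fun z : ℤ => (z : ℝ)) * P = Matrix.diagonal d)
    (hpos : Nat.card {i // 0 < d i} = sp) (hneg : Nat.card {i // d i < 0} = sm) :
    Int.ModEq 2 (ell2 ((Fin n → ℤ) ⧸ LinearMap.range (Matrix.toLin' G)) : ℤ)
      ((sp : ℤ) - (sm : ℤ)) :=
  stmt7_general n sp sm G heven hdet P hP d hdiag hpos hneg
end

section
/- Let q be a nondegenerate finite quadratic form on a finite abelian group G. Let H = { α ∈ G : 2α = 0 } be the 2-torsion subgroup. Then there exists a subgroup H' ⊆ H of length ℓ₂(q) − 1 (i.e., an elementary abelian 2-group of rank ℓ₂(G) − 1, assuming ℓ₂(G) ≥ 1) such that the restriction q|H' takes values in 2ℤ/2ℤ ⊂ ℚ/2ℤ, i.e., q|H' is even. -/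
open QuadraticMap (polar)

def twoTorsion (G : Type*) [AddCommGroup G] : AddSubgroup G where
  carrier := {x | x + x = 0}
  zero_mem' := add_zero 0
  add_mem' {a b} (ha : a + a = 0) (hb : b + b = 0) := by
    change a + b + (a + b) = 0
    rw [add_add_add_comm, ha, hb, add_zero]
  neg_mem' {a} (ha : a + a = 0) := by
    change -a + -a = 0
    rw [← neg_add, ha, neg_zero]

theorem ell2_eq_factorization_card_twoTorsion (G : Type*) [AddCommGroup G] :
    ell2 G = (Nat.card (twoTorsion G)).factorization 2 :=
  rfl

theorem ell2_eq_factorization_card {K : Type*} [AddCommGroup K] (hK : ∀ x : K, x + x = 0) :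
    ell2 K = (Nat.card K).factorization 2 := by
  rw [ell2, Nat.card_congr (Equiv.subtypeUnivEquiv hK)]

section ElementaryTwoGroup

variable {A : Type*} [AddGroup A]

theorem isPGroup_two_multiplicative (hA : ∀ x : A, x + x = 0) : IsPGroup 2 (Multiplicative A) :=
  fun g => ⟨1, by rw [pow_one, pow_two]; exact hA g.toAdd⟩

theorem exists_card_eq_two_pow [Finite A] (hA : ∀ x : A, x + x = 0) : ∃ n, Nat.card A = 2 ^ n :=
  haveI : Fact (Nat.Prime 2) := ⟨Nat.prime_two⟩
  (isPGroup_two_multiplicative hA).exists_card_eq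

theorem AddSubgroup.exists_le_card_eq_two_pow (hA : ∀ x : A, x + x = 0) {E : AddSubgroup A} {n : ℕ}
    (hn : 2 ^ n ≤ Nat.card E) : ∃ W ≤ E, Nat.card W = 2 ^ n := by
  obtain ⟨W, hWE, hW⟩ := Sylow.exists_subgroup_le_card_pow_prime_of_le_card Nat.prime_two
    (isPGroup_two_multiplicative hA) (H := AddSubgroup.toSubgroup E) hn
  exact ⟨AddSubgroup.toSubgroup.symm W, AddSubgroup.toSubgroup.symm_apply_le.mpr hWE, hW⟩

end ElementaryTwoGroup

theorem AddCircle.card_range_le_of_nsmul_eq_zero {A 𝕜 : Type*} [AddGroup A] [AddCommGroup 𝕜]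
    [IsAddTorsionFree 𝕜] {p : 𝕜}
    (f : A →+ AddCircle p) {n : ℕ} (hn : n ≠ 0) (hf : ∀ a, n • f a = 0) :
    Nat.card f.range ≤ n := by
  have htors := AddCircle.card_torsion_le_of_isSMulRegular p n hn
    (nsmul_right_injective hn)
  have hfin : {x : AddCircle p | n • x = 0}.Finite := Set.finite_of_encard_le_coe htors
  rw [← SetLike.coe_sort_coe, Nat.card_coe_set_eq]
  calc (f.range : Set (AddCircle p)).ncard ≤ {x : AddCircle p | n • x = 0}.ncard :=
        Set.ncard_le_ncard (by rintro _ ⟨a, rfl⟩; exact hf a) hfin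
    _ ≤ n := by
        rw [← ENat.natCast_le_natCast, hfin.cast_ncard_eq]; exact htors

theorem AddCircle.exists_int_eq_of_two_nsmul_eq_zero {u : AddCircle (2 : ℚ)} (hu : 2 • u = 0) :
    ∃ m : ℤ, u = ((m : ℚ) : AddCircle (2 : ℚ)) := by
  have : Fact ((0 : ℚ) < 2) := ⟨two_pos⟩
  obtain ⟨m, -, rfl⟩ := (AddCircle.nsmul_eq_zero_iff two_pos).mp hu
  exact ⟨m, by push_cast; ring_nf⟩

section QuadraticFunction

variable {G N : Type*} [AddCommGroup G] [AddCommGroup N] {q : G → N}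

theorem map_zero_of_third_difference
    (hpolar : ∀ a b c : G,
      q (a + b + c) - q (a + b) - q (a + c) - q (b + c) + q a + q b + q c = 0) :
    q 0 = 0 := by
  simpa using hpolar 0 0 0

theorem polar_add_left_of_third_difference
    (hpolar : ∀ a b c : G,
      q (a + b + c) - q (a + b) - q (a + c) - q (b + c) + q a + q b + q c = 0) (a b c : G) :
    polar q (a + b) c = polar q a c + polar q b c := by
  rw [← sub_eq_zero, ← hpolar a b c, polar, polar, polar]
  abel

theorem two_nsmul_polar_eq_zero
    (hpolar : ∀ a b c : G,
      q (a + b + c) - q (a + b) - q (a + c) - q (b + c) + q a + q b + q c = 0)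
    {x : G} (hx : x + x = 0) (y : G) : 2 • polar q x y = 0 := by
  rw [two_nsmul, ← polar_add_left_of_third_difference hpolar, hx, polar, zero_add,
    map_zero_of_third_difference hpolar, sub_zero, sub_self]

theorem two_nsmul_two_nsmul_eq_zero (hq : ∀ (n : ℤ) (a : G), q (n • a) = (n ^ 2 : ℤ) • q a)
    {x : G} (hx : x + x = 0) : 2 • 2 • q x = 0 := by
  have h0 : q 0 = 0 := by simpa using hq 0 0
  have h := hq 2 x
  rw [two_zsmul, hx, h0] at h
  rw [h, smul_smul, ← natCast_zsmul]
  norm_num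

def twoTorsionDouble
    (hpolar : ∀ a b c : G,
      q (a + b + c) - q (a + b) - q (a + c) - q (b + c) + q a + q b + q c = 0) :
    twoTorsion G →+ N :=
  AddMonoidHom.mk' (fun x => 2 • q x) fun x y => by
    change 2 • q (x + y : G) = 2 • q x + 2 • q y
    rw [QuadraticMap.map_add q, nsmul_add, two_nsmul_polar_eq_zero hpolar x.2, add_zero, nsmul_add]

end QuadraticFunction

theorem exists_addSubgroup_twoTorsion_integral {G : Type*} [AddCommGroup G]
    (q : G → AddCircle (2 : ℚ))
    (hq : ∀ (n : ℤ) (a : G), q (n • a) = (n ^ 2 : ℤ) • q a)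
    (hpolar : ∀ a b c : G,
      q (a + b + c) - q (a + b) - q (a + c) - q (b + c) + q a + q b + q c = 0)
    {n : ℕ} (hn : Nat.card (twoTorsion G) = 2 ^ n) :
    ∃ W : AddSubgroup (twoTorsion G), Nat.card W = 2 ^ (n - 1) ∧
      ∀ x ∈ W, ∃ m : ℤ, q x = ((m : ℚ) : AddCircle (2 : ℚ)) := by
  set f := twoTorsionDouble hpolar
  have hrange : Nat.card f.range ≤ 2 := AddCircle.card_range_le_of_nsmul_eq_zero f two_ne_zero
    fun x => two_nsmul_two_nsmul_eq_zero hq x.2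
  have hker : 2 ^ (n - 1) ≤ Nat.card f.ker := by
    have h : 2 ^ n ≤ Nat.card f.ker * 2 := by
      rw [← hn, ← f.ker.card_mul_index, AddSubgroup.index_ker]
      exact Nat.mul_le_mul_left _ hrange
    rcases n with _ | n
    · rw [pow_zero] at h ⊢
      omega
    · rw [pow_succ] at h
      simpa using h
  obtain ⟨W, hWker, hW⟩ := AddSubgroup.exists_le_card_eq_two_pow (fun x => Subtype.ext x.2) hker
  exact ⟨W, hW, fun x hx => AddCircle.exists_int_eq_of_two_nsmul_eq_zero (hWker hx)⟩

theorem stmt8_general {G : Type*} [AddCommGroup G] [Finite G]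
    (q : G → AddCircle (2 : ℚ))
    (hq : ∀ (n : ℤ) (a : G), q (n • a) = (n ^ 2 : ℤ) • q a)
    (hpolar : ∀ a b c : G,
      q (a + b + c) - q (a + b) - q (a + c) - q (b + c) + q a + q b + q c = 0) :
    ∃ H' : AddSubgroup G, (∀ x ∈ H', x + x = 0) ∧ ell2 ↥H' = ell2 G - 1 ∧
      ∀ x ∈ H', ∃ m : ℤ, q x = ((m : ℚ) : AddCircle (2 : ℚ)) := by
  obtain ⟨n, hn⟩ := exists_card_eq_two_pow (A := twoTorsion G) fun x => Subtype.ext x.2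
  obtain ⟨W, hW, hWeven⟩ := exists_addSubgroup_twoTorsion_integral q hq hpolar hn
  have htors : ∀ x ∈ W.map (twoTorsion G).subtype, x + x = 0 := by
    rintro _ ⟨y, -, rfl⟩
    exact y.2
  refine ⟨W.map (twoTorsion G).subtype, htors, ?_, ?_⟩
  · rw [ell2_eq_factorization_card fun x => Subtype.ext (htors x x.2),
      ell2_eq_factorization_card_twoTorsion, hn,
      AddSubgroup.card_map_of_injective (twoTorsion G).subtype_injective, hW]
    simp [Nat.Prime.factorization_pow Nat.prime_two]
  · rintro _ ⟨y, hy, rfl⟩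
    exact hWeven y hy

/-- Any nondegenerate finite quadratic form `q : G → ℚ/2ℤ` contains a 2-elementary
subgroup `H'` of length `ℓ₂(q) - 1` on which `q` takes only even values
(values in `ℤ/2ℤ ⊂ ℚ/2ℤ`). -/
theorem stmt8 {G : Type*} [AddCommGroup G] [Finite G]
    (q : G → AddCircle (2 : ℚ))
    (hq : ∀ (n : ℤ) (a : G), q (n • a) = (n ^ 2 : ℤ) • q a)
    (hpolar : ∀ a b c : G,
      q (a + b + c) - q (a + b) - q (a + c) - q (b + c) + q a + q b + q c = 0)
    (hnd : ∀ a : G, (∀ b : G, q (a + b) - q a - q b = 0) → a = 0)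
    (hl : 1 ≤ ell2 G) :
    ∃ H' : AddSubgroup G, (∀ x ∈ H', x + x = 0) ∧ ell2 ↥H' = ell2 G - 1 ∧
      ∀ x ∈ H', ∃ m : ℤ, q x = ((m : ℚ) : AddCircle (2 : ℚ)) :=
  stmt8_general q hq hpolar
end

section
/- An integral lattice L of rank n satisfies ℓ₂(L^∨/L) = n if and only if there exists an integral lattice L' with L = L'(2). Moreover, in this case L' is even if and only if the discriminant form of L restricted to 2-torsion is even. -/
open Matrix

theorem Pi.even_iff {α : Type*} {M : α → Type*} [∀ a, Add (M a)] (f : ∀ a, M a) :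
    Even f ↔ ∀ a, Even (f a) :=
  ⟨fun ⟨r, hr⟩ a => ⟨r a, congrFun hr a⟩,
    fun h => ⟨fun a => (h a).choose, funext fun a => (h a).choose_spec⟩⟩

theorem Int.even_iff_castRingHom_comp_eq_zero {α : Type*} (w : α → ℤ) :
    Even w ↔ Int.castRingHom (ZMod 2) ∘ w = 0 := by
  simp only [Pi.even_iff, funext_iff, Function.comp_apply, Pi.zero_apply, eq_intCast,
    ZMod.intCast_eq_zero_iff_even]

theorem ZMod.castRingHom_comp_cast_comp {α : Type*} {n : ℕ} (v : α → ZMod n) :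
    Int.castRingHom (ZMod n) ∘ ZMod.cast ∘ v = v :=
  funext fun a => by simp

theorem RingHom.comp_mulVec {m n R S : Type*} [Fintype n] [NonAssocSemiring R]
    [NonAssocSemiring S] (f : R →+* S) (M : Matrix m n R) (v : n → R) :
    f ∘ (M *ᵥ v) = M.map f *ᵥ (f ∘ v) :=
  funext (f.map_mulVec M v)

theorem Matrix.even_iff_map_castRingHom_eq_zero {m n : Type*} (G : Matrix m n ℤ) :
    Even G ↔ G.map (Int.castRingHom (ZMod 2)) = 0 := by
  refine (Pi.even_iff (M := fun _ : m => n → ℤ) G).trans ?_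
  simp only [Pi.even_iff, ← Matrix.ext_iff, map_apply, zero_apply, eq_intCast,
    ZMod.intCast_eq_zero_iff_even]

theorem Matrix.finrank_ker_toLin'_eq_card_iff {ι K : Type*} [Fintype ι] [DecidableEq ι] [Field K]
    (M : Matrix ι ι K) :
    Module.finrank K (LinearMap.ker M.toLin') = Fintype.card ι ↔ M = 0 := by
  rw [← map_eq_zero_iff _ toLin'.injective, ← LinearMap.ker_eq_top,
    ← Module.finrank_fintype_fun_eq_card K]
  exact ⟨Submodule.eq_top_of_finrank_eq, fun h => h ▸ finrank_top K _⟩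

section TwoTorsion

variable {ι : Type*} [Fintype ι] [DecidableEq ι] (G : Matrix ι ι ℤ)

local notation "Ḡ" => G.map (Int.castRingHom (ZMod 2))

theorem Matrix.even_mulVec_cast_comp {v : ι → ZMod 2} (hv : v ∈ LinearMap.ker Ḡ.toLin') :
    Even (G *ᵥ (ZMod.cast ∘ v)) := by
  rw [Int.even_iff_castRingHom_comp_eq_zero, RingHom.comp_mulVec,
    ZMod.castRingHom_comp_cast_comp]
  exact hv

noncomputable def Matrix.kerModTwoToTwoTorsion (v : LinearMap.ker Ḡ.toLin') :
    {x : (ι → ℤ) ⧸ LinearMap.range G.toLin' // x + x = 0} :=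
  ⟨Submodule.Quotient.mk (G.even_mulVec_cast_comp v.2).choose, by
    rw [← Submodule.Quotient.mk_add, Submodule.Quotient.mk_eq_zero,
      ← (G.even_mulVec_cast_comp v.2).choose_spec]
    exact ⟨_, rfl⟩⟩

theorem Matrix.exists_kerModTwoToTwoTorsion_eq (v : LinearMap.ker Ḡ.toLin') :
    ∃ r, G *ᵥ (ZMod.cast ∘ (v : ι → ZMod 2)) = r + r ∧
      (G.kerModTwoToTwoTorsion v : (ι → ℤ) ⧸ LinearMap.range G.toLin') =
        Submodule.Quotient.mk r :=
  ⟨_, (G.even_mulVec_cast_comp v.2).choose_spec, rfl⟩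

theorem Matrix.kerModTwoToTwoTorsion_injective (hG : Function.Injective G.mulVec) :
    Function.Injective G.kerModTwoToTwoTorsion := by
  intro v w hvw
  obtain ⟨r, hr, hrv⟩ := G.exists_kerModTwoToTwoTorsion_eq v
  obtain ⟨s, hs, hsw⟩ := G.exists_kerModTwoToTwoTorsion_eq w
  obtain ⟨z, hz⟩ : r - s ∈ LinearMap.range G.toLin' := by
    rw [← Submodule.Quotient.eq, ← hrv, ← hsw, hvw]
  have heven : ZMod.cast ∘ (v : ι → ZMod 2) - ZMod.cast ∘ (w : ι → ZMod 2) = z + z := by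
    apply hG
    rw [mulVec_sub, hr, hs, mulVec_add, ← toLin'_apply, hz]
    abel
  have hvw := (Int.even_iff_castRingHom_comp_eq_zero _).mp ⟨z, heven⟩
  rw [map_comp_sub, ZMod.castRingHom_comp_cast_comp, ZMod.castRingHom_comp_cast_comp] at hvw
  exact Subtype.ext (sub_eq_zero.mp hvw)

theorem Matrix.kerModTwoToTwoTorsion_surjective :
    Function.Surjective G.kerModTwoToTwoTorsion := by
  rintro ⟨t, ht⟩
  obtain ⟨x, rfl⟩ := Submodule.Quotient.mk_surjective _ t
  obtain ⟨y, hy⟩ : x + x ∈ LinearMap.range G.toLin' := by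
    rwa [← Submodule.Quotient.mk_eq_zero, Submodule.Quotient.mk_add]
  rw [toLin'_apply] at hy
  have hv : Int.castRingHom (ZMod 2) ∘ y ∈ LinearMap.ker Ḡ.toLin' := by
    rw [LinearMap.mem_ker, toLin'_apply, ← RingHom.comp_mulVec, hy,
      ← Int.even_iff_castRingHom_comp_eq_zero]
    exact ⟨x, rfl⟩
  obtain ⟨z, hz⟩ : Even (ZMod.cast ∘ (Int.castRingHom (ZMod 2) ∘ y) - y) := by
    rw [Int.even_iff_castRingHom_comp_eq_zero, map_comp_sub, ZMod.castRingHom_comp_cast_comp,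
      sub_self]
  obtain ⟨r, hr, hrv⟩ := G.exists_kerModTwoToTwoTorsion_eq ⟨_, hv⟩
  refine ⟨⟨_, hv⟩, Subtype.ext ?_⟩
  rw [hrv, Submodule.Quotient.eq]
  have hrx : r + r = (x + G *ᵥ z) + (x + G *ᵥ z) := by
    dsimp only at hr
    rw [← hr, sub_eq_iff_eq_add'.mp hz, mulVec_add, mulVec_add, hy]
    abel
  rw [← two_nsmul, ← two_nsmul] at hrx
  rw [nsmul_right_injective two_ne_zero hrx]
  exact ⟨z, by rw [toLin'_apply]; abel⟩

theorem Matrix.ell2_coker_eq_finrank_ker (hG : Function.Injective G.mulVec) :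
    ell2 ((ι → ℤ) ⧸ LinearMap.range G.toLin') =
      Module.finrank (ZMod 2) (LinearMap.ker Ḡ.toLin') := by
  rw [ell2, ← Nat.card_eq_of_bijective _ ⟨G.kerModTwoToTwoTorsion_injective hG,
    G.kerModTwoToTwoTorsion_surjective⟩, Module.natCard_eq_pow_finrank (K := ZMod 2),
    Nat.card_zmod, Nat.Prime.factorization_pow Nat.prime_two]
  simp

theorem Matrix.ell2_coker_eq_card_iff_even (hG : Function.Injective G.mulVec) :
    ell2 ((ι → ℤ) ⧸ LinearMap.range G.toLin') = Fintype.card ι ↔ Even G := by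
  rw [G.ell2_coker_eq_finrank_ker hG, finrank_ker_toLin'_eq_card_iff,
    even_iff_map_castRingHom_eq_zero]

end TwoTorsion

theorem Matrix.IsSymm.of_nsmul {ι R : Type*} [AddMonoid R] [IsAddTorsionFree R] {n : ℕ}
    (hn : n ≠ 0) {A : Matrix ι ι R} (h : (n • A).IsSymm) : A.IsSymm := by
  rw [IsSymm, transpose_smul] at h
  exact nsmul_right_injective (M := ι → ι → R) hn h

theorem Matrix.IsSymm.dotProduct_mulVec_comm {ι R : Type*} [Fintype ι] [CommSemiring R]
    {A : Matrix ι ι R} (hA : A.IsSymm) (u w : ι → R) : w ⬝ᵥ A *ᵥ u = u ⬝ᵥ A *ᵥ w := by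
  rw [dotProduct_mulVec, ← mulVec_transpose, hA.eq, dotProduct_comm]

theorem Matrix.two_dvd_dotProduct_mulVec_self {ι : Type*} [Fintype ι] {A : Matrix ι ι ℤ}
    (hA : A.IsSymm) (hdiag : ∀ i, 2 ∣ A i i) (v : ι → ℤ) : 2 ∣ v ⬝ᵥ A *ᵥ v := by
  classical
  rw [← Finset.univ_sum_single v]
  refine Finset.sum_induction _ (fun u => 2 ∣ u ⬝ᵥ A *ᵥ u) (fun u w hu hw => ?_) (by simp)
    fun i _ => ?_
  · have hadd :
        (u + w) ⬝ᵥ A *ᵥ (u + w) = u ⬝ᵥ A *ᵥ u + w ⬝ᵥ A *ᵥ w + 2 * (u ⬝ᵥ A *ᵥ w) := by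
      rw [add_dotProduct, mulVec_add, dotProduct_add, dotProduct_add,
        hA.dotProduct_mulVec_comm u w]
      ring
    rw [hadd]
    exact dvd_add (dvd_add hu hw) (dvd_mul_right _ _)
  · simp only [single_dotProduct, mulVec_single, Pi.smul_apply, col_apply, op_smul_eq_mul]
    exact ((hdiag i).mul_right _).mul_left _

theorem Matrix.map_intCast_two_nsmul {ι : Type*} (A : Matrix ι ι ℤ) :
    ((2 • A).map fun z : ℤ => (z : ℚ)) = 2 • A.map fun z : ℤ => (z : ℚ) :=
  Matrix.map_smul _ _ (by simp) A

theorem Matrix.single_half_dotProduct_two_nsmul_mulVec {ι : Type*} [Fintype ι] [DecidableEq ι]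
    (A : Matrix ι ι ℚ) (i : ι) (y : ι → ℚ) :
    Pi.single i (1 / 2) ⬝ᵥ (2 • A) *ᵥ y = (A *ᵥ y) i := by
  rw [single_dotProduct, smul_mulVec, Pi.smul_apply, two_nsmul]; ring

theorem Matrix.exists_intCast_eq_dotProduct_two_nsmul_mulVec {ι : Type*} [Fintype ι]
    {A : Matrix ι ι ℤ} (hA : A.IsSymm) (hdiag : ∀ i, 2 ∣ A i i) (x : ι → ℚ)
    (hx : ∀ i, ∃ z : ℤ, 2 * x i = z) :
    ∃ m : ℤ, x ⬝ᵥ (2 • A.map fun z : ℤ => (z : ℚ)) *ᵥ x = m := by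
  choose z hz using hx
  obtain ⟨m, hm⟩ := two_dvd_dotProduct_mulVec_self hA hdiag z
  have hcast := (Int.castRingHom ℚ).map_dotProduct z (A *ᵥ z)
  rw [RingHom.comp_mulVec, hm] at hcast
  have hxz : Int.castRingHom ℚ ∘ z = 2 • x := funext fun i => by simp [← hz i, two_mul]
  refine ⟨m, ?_⟩
  rw [hxz] at hcast
  simp only [smul_mulVec, dotProduct_smul, smul_dotProduct, mulVec_smul] at hcast ⊢
  simp only [Int.coe_castRingHom, nsmul_eq_mul, Int.cast_mul, Int.cast_ofNat,
    Nat.cast_ofNat] at hcast ⊢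
  linarith

theorem Matrix.two_dvd_apply_self_of_exists_intCast_eq {ι : Type*} [Fintype ι] [DecidableEq ι]
    {A : Matrix ι ι ℤ} (i : ι)
    (h : ∃ m : ℤ, (Pi.single i (1 / 2) : ι → ℚ) ⬝ᵥ (2 • A.map fun z : ℤ => (z : ℚ)) *ᵥ
      Pi.single i (1 / 2) = (m : ℚ)) : 2 ∣ A i i := by
  obtain ⟨m, hm⟩ := h
  rw [single_half_dotProduct_two_nsmul_mulVec, mulVec_single, Pi.smul_apply, col_apply,
    op_smul_eq_mul, map_apply] at hm
  exact ⟨m, by exact_mod_cast (by linarith : (A i i : ℚ) = 2 * m)⟩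

theorem Matrix.single_half_dotProduct_two_nsmul_mulVec_intCast {ι : Type*} [Fintype ι]
    [DecidableEq ι] (A : Matrix ι ι ℤ) (i : ι) (y : ι → ℤ) :
    Pi.single i (1 / 2) ⬝ᵥ (2 • A.map fun z : ℤ => (z : ℚ)) *ᵥ (fun j => (y j : ℚ)) =
      (((A *ᵥ y) i : ℤ) : ℚ) := by
  rw [single_half_dotProduct_two_nsmul_mulVec]
  exact ((Int.castRingHom ℚ).map_mulVec A y i).symm

/-- An integral lattice `L` of rank `n` (with Gram matrix `G`) satisfies
`ℓ₂(L^∨/L) = n` if and only if `L = L'(2)` for some integral lattice `L'` (i.e. `G = 2G'`);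
and in that case `L'` is even iff the discriminant form of `L` restricted to the
2-torsion of `L^∨/L` takes only integral (even) values in `ℚ/2ℤ`. -/
theorem stmt11 (n : ℕ) (G : Matrix (Fin n) (Fin n) ℤ) (hsymm : G.IsSymm)
    (hdet : G.det ≠ 0) :
    (ell2 ((Fin n → ℤ) ⧸ LinearMap.range (Matrix.toLin' G)) = n ↔
      ∃ G' : Matrix (Fin n) (Fin n) ℤ, G = 2 • G') ∧
    (∀ G' : Matrix (Fin n) (Fin n) ℤ, G = 2 • G' →
      ((∀ i, 2 ∣ G' i i) ↔
        ∀ x : Fin n → ℚ,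
          (∀ y : Fin n → ℤ, ∃ m : ℤ,
            dotProduct x ((G.map fun z : ℤ => (z : ℚ)).mulVec fun i => (y i : ℚ)) = m) →
          (∀ i, ∃ z : ℤ, 2 * x i = z) →
          ∃ m : ℤ, dotProduct x ((G.map fun z : ℤ => (z : ℚ)).mulVec x) = m)) := by
  refine ⟨?_, ?_⟩
  · have := G.ell2_coker_eq_card_iff_even (mulVec_injective_of_det_ne_zero hdet)
    rwa [Fintype.card_fin, even_iff_exists_two_nsmul] at this
  rintro A rfl
  have hA := hsymm.of_nsmul two_ne_zero
  rw [map_intCast_two_nsmul]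
  refine ⟨fun hdiag x _ hx => exists_intCast_eq_dotProduct_two_nsmul_mulVec hA hdiag x hx,
    fun h i => two_dvd_apply_self_of_exists_intCast_eq i (h _ ?_ ?_)⟩
  · exact fun y => ⟨_, single_half_dotProduct_two_nsmul_mulVec_intCast A i y⟩
  · intro j
    refine ⟨(Pi.single i 1 : Fin n → ℤ) j, ?_⟩
    rcases eq_or_ne j i with rfl | hj <;> simp [*]
end

section
/- Define c_n = π^{-(n+1)/2} Γ((n+1)/2) (1 + 2^{-s}) ζ(2s)/ζ(s) where n = 2s or n = 2s − 1 with s ≥ 2 an integer. Then c_n ≥ 8 for all n ≥ 21. (It suffices to show that (1+2^{-s}) > 1, that ζ(2s)/ζ(s) is increasing in s for s ≥ 2, that π^{-(n+1)/2} Γ((n+1)/2) is increasing for n ≥ 6, and that c_{21} > 8.) -/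
open Real

theorem summable_nat_rpow_neg {t : ℝ} (ht : 1 < t) : Summable fun m : ℕ ↦ (m : ℝ) ^ (-t) :=
  summable_nat_rpow.mpr (by linarith)

theorem one_le_zeta_s17 {t : ℝ} (ht : 1 < t) : 1 ≤ zeta t := by
  simpa [zeta] using (summable_nat_rpow_neg ht).le_tsum 1 fun m _ ↦ rpow_nonneg m.cast_nonneg _

theorem zeta_two : zeta 2 = π ^ 2 / 6 := by
  rw [zeta, ← hasSum_zeta_two.tsum_eq]
  refine tsum_congr fun m ↦ ?_
  rw [rpow_neg m.cast_nonneg, one_div, show (2 : ℝ) = (2 : ℕ) by norm_num, rpow_natCast]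

theorem nat_rpow_neg_le {t : ℝ} (ht : 2 ≤ t) (m : ℕ) :
    (m : ℝ) ^ (-t) ≤ (if m = 1 then 1 else 0) + 2 ^ (2 - t) * (m : ℝ) ^ (-(2 : ℝ)) := by
  rcases m with _ | _ | m
  · simp [zero_rpow (by linarith : -t ≠ 0)]
  · norm_num
    linarith [rpow_nonneg zero_le_two (2 - t)]
  · have hm : (2 : ℝ) ≤ ((m + 2 : ℕ) : ℝ) := by
      push_cast; linarith [m.cast_nonneg (α := ℝ)]
    have hsplit : ((m + 2 : ℕ) : ℝ) ^ (-t)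
        = ((m + 2 : ℕ) : ℝ) ^ (2 - t) * ((m + 2 : ℕ) : ℝ) ^ (-(2 : ℝ)) := by
      rw [← rpow_add (by positivity)]; ring_nf
    rw [hsplit, if_neg (by omega), zero_add]
    exact mul_le_mul_of_nonneg_right
      (rpow_le_rpow_of_nonpos zero_lt_two hm (by linarith)) (by positivity)

theorem zeta_le_one_add_two_rpow_mul_zeta_two {t : ℝ} (ht : 2 ≤ t) :
    zeta t ≤ 1 + 2 ^ (2 - t) * zeta 2 := by
  have hind : HasSum (fun m : ℕ ↦ if m = 1 then (1 : ℝ) else 0) 1 := hasSum_ite_eq 1 1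
  have htail := ((summable_nat_rpow_neg one_lt_two).mul_left (2 ^ (2 - t))).hasSum
  unfold zeta
  rw [← tsum_mul_left]
  exact hasSum_le (nat_rpow_neg_le ht) (summable_nat_rpow_neg (by linarith)).hasSum
    (hind.add htail)

theorem zeta_le_of_eleven_le {t : ℝ} (ht : 11 ≤ t) : zeta t ≤ 257 / 256 := by
  have h2 : (2 : ℝ) ^ (2 - t) ≤ 2 ^ (-9 : ℝ) :=
    rpow_le_rpow_of_exponent_le one_le_two (by linarith)
  have h9 : (2 : ℝ) ^ (-9 : ℝ) = 1 / 512 := by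
    rw [rpow_neg zero_le_two, show (9 : ℝ) = (9 : ℕ) by norm_num, rpow_natCast]; norm_num
  have hζ2 : zeta 2 ≤ 2 := by
    rw [zeta_two]; nlinarith [pi_lt_d2, pi_pos]
  calc zeta t ≤ 1 + 2 ^ (2 - t) * zeta 2 :=
        zeta_le_one_add_two_rpow_mul_zeta_two (by linarith)
    _ ≤ 1 + 1 / 512 * 2 := by
        gcongr
        · exact zero_le_one.trans (one_le_zeta_s17 one_lt_two)
        · exact h9 ▸ h2
    _ = 257 / 256 := by norm_num

theorem le_zeta_two_mul_div_zeta {t : ℝ} (ht : 11 ≤ t) :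
    256 / 257 ≤ zeta (2 * t) / zeta t := by
  have hζ := zeta_le_of_eleven_le ht
  have hζpos : 0 < zeta t := zero_lt_one.trans_le (one_le_zeta_s17 (by linarith))
  rw [le_div_iff₀ hζpos]
  nlinarith [one_le_zeta_s17 (by linarith : 1 < 2 * t)]

theorem pi_rpow_neg_mul_Gamma_add_one {x : ℝ} (hx : 0 < x) :
    π ^ (-(x + 1)) * Gamma (x + 1) = π ^ (-x) * Gamma x * (x / π) := by
  rw [Gamma_add_one hx.ne', neg_add, rpow_add pi_pos, rpow_neg_one]
  field_simp

theorem pi_rpow_neg_mul_Gamma_le_add_nat {x : ℝ} (hx : π ≤ x) (k : ℕ) :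
    π ^ (-x) * Gamma x ≤ π ^ (-(x + k)) * Gamma (x + k) := by
  induction k with
  | zero => simp
  | succ k ih =>
    have hxk : π ≤ x + k := le_add_of_le_of_nonneg hx k.cast_nonneg
    have hpos : 0 < x + k := pi_pos.trans_le hxk
    calc π ^ (-x) * Gamma x ≤ π ^ (-(x + k)) * Gamma (x + k) := ih
      _ ≤ π ^ (-(x + k)) * Gamma (x + k) * ((x + k) / π) :=
          le_mul_of_one_le_right (by positivity) ((one_le_div pi_pos).mpr hxk)
      _ = π ^ (-(x + ↑(k + 1))) * Gamma (x + ↑(k + 1)) := by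
          rw [Nat.cast_succ, ← add_assoc, pi_rpow_neg_mul_Gamma_add_one hpos]

theorem pi_pow_eleven_lt : π ^ 11 < 3.15 ^ 11 := by
  gcongr
  exact pi_lt_d2

theorem le_pi_rpow_neg_mul_Gamma_eleven : 81 / 10 ≤ π ^ (-(11 : ℝ)) * Gamma 11 := by
  have hΓ : Gamma 11 = 3628800 := by
    rw [show (11 : ℝ) = (10 : ℕ) + 1 by norm_num, Gamma_nat_eq_factorial]
    norm_num [Nat.factorial]
  rw [hΓ, rpow_neg pi_pos.le, show (11 : ℝ) = (11 : ℕ) by norm_num, rpow_natCast,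
    inv_mul_eq_div, le_div_iff₀ (by positivity)]
  nlinarith [pi_pow_eleven_lt]

theorem le_pi_rpow_neg_mul_Gamma_eleven_add_half :
    81 / 10 ≤ π ^ (-((11 : ℝ) + 1 / 2)) * Gamma (11 + 1 / 2) := by
  have hΓ : Gamma (11 + 1 / 2) = 13749310575 * √π / 2 ^ 11 := by
    rw [show (11 : ℝ) = (11 : ℕ) by norm_num, Gamma_nat_add_half]
    norm_num [Nat.doubleFactorial]
  have hπ : π ^ ((11 : ℝ) + 1 / 2) = π ^ 11 * √π := by
    rw [rpow_add pi_pos, sqrt_eq_rpow, show (11 : ℝ) = (11 : ℕ) by norm_num, rpow_natCast]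
  have hsqrt : 0 < √π := sqrt_pos.mpr pi_pos
  rw [hΓ, rpow_neg pi_pos.le, hπ, inv_mul_eq_div, le_div_iff₀ (by positivity)]
  nlinarith [pi_pow_eleven_lt]

theorem le_pi_rpow_neg_mul_Gamma_half_succ {n : ℕ} (hn : 21 ≤ n) :
    81 / 10 ≤ π ^ (-(((n : ℝ) + 1) / 2)) * Gamma (((n : ℝ) + 1) / 2) := by
  have hπ : π ≤ 11 := pi_lt_d2.le.trans (by norm_num)
  obtain ⟨k, hk | hk⟩ := Nat.even_or_odd' (n - 21)
  · have hx : ((n : ℝ) + 1) / 2 = 11 + k := by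
      rw [show n = 21 + 2 * k by omega]; push_cast; ring
    rw [hx]
    exact le_pi_rpow_neg_mul_Gamma_eleven.trans (pi_rpow_neg_mul_Gamma_le_add_nat hπ k)
  · have hx : ((n : ℝ) + 1) / 2 = 11 + 1 / 2 + k := by
      rw [show n = 22 + 2 * k by omega]; push_cast; ring
    rw [hx]
    exact le_pi_rpow_neg_mul_Gamma_eleven_add_half.trans
      (pi_rpow_neg_mul_Gamma_le_add_nat (hπ.trans (by norm_num)) k)

theorem stmt17_general (n s : ℕ) (hn : 21 ≤ n) (h : n = 2 * s ∨ n = 2 * s - 1) :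
    8 ≤ Real.pi ^ (-(((n : ℝ) + 1) / 2)) * Real.Gamma (((n : ℝ) + 1) / 2) *
      (1 + 2 ^ (-(s : ℝ))) * (zeta (2 * s) / zeta s) := by
  have hs : (11 : ℝ) ≤ s := by exact_mod_cast (show 11 ≤ s by omega)
  have hΓ := le_pi_rpow_neg_mul_Gamma_half_succ hn
  have htwo : 1 ≤ 1 + (2 : ℝ) ^ (-(s : ℝ)) := le_add_of_nonneg_right (by positivity)
  have hζ := le_zeta_two_mul_div_zeta hs
  calc (8 : ℝ) ≤ 81 / 10 * 1 * (256 / 257) := by norm_num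
    _ ≤ _ := by gcongr

/-- With `c_n = π^{-(n+1)/2} Γ((n+1)/2) (1 + 2^{-s}) ζ(2s)/ζ(s)` for `n = 2s` or
`n = 2s - 1`, `s ≥ 2` an integer, we have `c_n ≥ 8` for all `n ≥ 21`. -/
theorem stmt17 (n s : ℕ) (hn : 21 ≤ n) (hs : 2 ≤ s) (h : n = 2 * s ∨ n = 2 * s - 1) :
    8 ≤ Real.pi ^ (-(((n : ℝ) + 1) / 2)) * Real.Gamma (((n : ℝ) + 1) / 2) *
      (1 + 2 ^ (-(s : ℝ))) * (zeta (2 * s) / zeta s) :=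
  stmt17_general n s hn h
end

section
/- Let f: F → ℚ/2ℤ be a nondegenerate finite quadratic form with f ≅ n·u₁ and g: G → ℚ/2ℤ a nondegenerate finite quadratic form. Let H ⊆ F and K ⊆ G be subgroups with an isometry γ: (f|H) → (g|K), and let Γ = {(α, γ(α)) : α ∈ H} ⊆ F ⊕ G be its graph, Γ^⊥ its orthogonal complement in F ⊕ G with respect to f ⊕ (−g). Then ℓ₂(F) + ℓ₂(G) = ℓ₂(Γ^⊥/Γ) + 2 ℓ₂(H). -/
/-!
Write `A = F × G`, `P = Γ^⊥` and `X[2]` for the 2-torsion of a group `X`. Pairing with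
`Γ ≅ H` gives a map `A[2] → Hom(H, ℚ/2ℤ)` with kernel `P[2]`. It is onto: `ℚ/2ℤ` is divisible,
so a character of `H` extends to `F`, and as the hyperbolic form on `F` is nondegenerate that
extension is `bf x` for some `x`, whence the character is the pairing with `(x, 0)`. Since `H`
is 2-elementary, `|Hom(H, ℚ/2ℤ)| = |H|`. Next, `Γ` is isotropic and meets `2A` trivially
(`F` is 2-elementary and `Γ` is a graph over `H ⊆ F`), so `P[2] → (P/Γ)[2]` is onto with
kernel `Γ ≅ H`. Thus `|F[2]| · |G[2]| = |H|² · |(P/Γ)[2]|`; take 2-adic valuations.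
-/

/-- The hyperbolic finite quadratic form `u₁` on `(ℤ/2)²`, with values in `ℚ/2ℤ`. -/
noncomputable def q1 (x : ZMod 2 × ZMod 2) : AddCircle (2 : ℚ) :=
  (((x.1.val : ℚ) * (x.2.val : ℚ)) : ℚ)

/-- The orthogonal sum `n·u₁` of `n` copies of `u₁`. -/
noncomputable def qU (n : ℕ) (α : Fin n → ZMod 2 × ZMod 2) : AddCircle (2 : ℚ) :=
  ∑ i, q1 (α i)

/-- The bilinear form of `f ⊕ (−g)` built from the (bundled) bilinear forms of `f`, `g`. -/
noncomputable def sumForm {F G C : Type*} [AddCommGroup F] [AddCommGroup G]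
    [AddCommGroup C] (bf : F →+ F →+ C) (bg : G →+ G →+ C) :
    (F × G) →+ (F × G) →+ C :=
  AddMonoidHom.mk'
    (fun x => AddMonoidHom.mk' (fun y => bf x.1 y.1 - bg x.2 y.2)
      (fun y z => by
        simp only [Prod.fst_add, Prod.snd_add, map_add, AddMonoidHom.add_apply]
        abel))
    (fun x y => by
      ext z
      simp only [Prod.fst_add, Prod.snd_add, map_add, AddMonoidHom.add_apply,
        AddMonoidHom.mk'_apply]
      abel)

/-- The orthogonal complement of a subgroup with respect to a bilinear form. -/
def biperp {A C : Type*} [AddCommGroup A] [AddCommGroup C] (B : A →+ A →+ C)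
    (S : AddSubgroup A) : AddSubgroup A where
  carrier := {x | ∀ y ∈ S, B x y = 0}
  zero_mem' := by intro y _; simp
  add_mem' := by
    intro a b ha hb y hy
    simp [map_add, AddMonoidHom.add_apply, ha y hy, hb y hy]
  neg_mem' := by
    intro a ha y hy
    simp [map_neg, AddMonoidHom.neg_apply, ha y hy]

open Function AddSubgroup

lemma ZMod.two_eq_zero_or_eq_one (c : ZMod 2) : c = 0 ∨ c = 1 := by
  revert c; decide

noncomputable def zmodTwoToAddCircle : ZMod 2 →+ AddCircle (2 : ℚ) :=
  ZMod.lift 2 ⟨zmultiplesHom (AddCircle (2 : ℚ)) ((1 : ℚ) : AddCircle (2 : ℚ)), by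
    rw [zmultiplesHom_apply, ← AddCircle.coe_zsmul]
    norm_num⟩

lemma zmodTwoToAddCircle_one : zmodTwoToAddCircle 1 = ((1 : ℚ) : AddCircle (2 : ℚ)) :=
  (ZMod.lift_coe 2 _ 1).trans (one_zsmul _)

lemma zmodTwoToAddCircle_injective : Injective zmodTwoToAddCircle := by
  refine (injective_iff_map_eq_zero _).2 fun c hc => ?_
  obtain rfl | rfl := c.two_eq_zero_or_eq_one
  · rfl
  · rw [zmodTwoToAddCircle_one, AddCircle.coe_eq_zero_of_pos_iff _ two_pos one_pos] at hc
    obtain ⟨m, hm⟩ := hc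
    rw [nsmul_eq_mul] at hm
    norm_cast at hm
    omega

lemma mem_range_zmodTwoToAddCircle {u : AddCircle (2 : ℚ)} (hu : u + u = 0) :
    u ∈ zmodTwoToAddCircle.range := by
  have : Fact ((0 : ℚ) < 2) := ⟨two_pos⟩
  rw [← two_nsmul, AddCircle.nsmul_eq_zero_iff two_pos] at hu
  obtain ⟨m, hm, rfl⟩ := hu
  interval_cases m
  · exact ⟨0, by simp⟩
  · exact ⟨1, by rw [zmodTwoToAddCircle_one]; norm_num⟩

lemma q1_eq (x : ZMod 2 × ZMod 2) : q1 x = zmodTwoToAddCircle (x.1 * x.2) := by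
  obtain ⟨a, b⟩ := x
  obtain rfl | rfl := a.two_eq_zero_or_eq_one <;> obtain rfl | rfl := b.two_eq_zero_or_eq_one <;>
    simp [q1, zmodTwoToAddCircle_one, -ZMod.natCast_val, ZMod.val_one]

section TwoElementary

variable {M : Type*} [AddCommGroup M] [Finite M]

lemma card_addMonoidHom_zmod_two (hM : ∀ x : M, x + x = 0) :
    Nat.card (M →+ ZMod 2) = Nat.card M := by
  let _ : Module (ZMod 2) M := AddCommGroup.zmodModule fun x => (two_nsmul x).trans (hM x)
  classical
  let b := Module.Basis.ofVectorSpace (ZMod 2) M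
  exact Nat.card_congr
    ((AddMonoidHom.toZModLinearMapEquiv 2).toEquiv.trans b.toDualEquiv.symm.toEquiv)

lemma card_addMonoidHom_addCircle_two (hM : ∀ x : M, x + x = 0) :
    Nat.card (M →+ AddCircle (2 : ℚ)) = Nat.card M := by
  rw [← card_addMonoidHom_zmod_two hM]
  refine (Nat.card_congr (Equiv.ofBijective (zmodTwoToAddCircle.comp : (M →+ ZMod 2) → _)
    ⟨fun ψ ψ' h => ?_, fun φ => ?_⟩)).symm
  · ext x
    exact zmodTwoToAddCircle_injective (DFunLike.congr_fun h x)
  · have hφ (x : M) : φ x ∈ zmodTwoToAddCircle.range :=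
      mem_range_zmodTwoToAddCircle (by rw [← map_add, hM, map_zero])
    refine ⟨(AddMonoidHom.ofInjective zmodTwoToAddCircle_injective).symm.toAddMonoidHom.comp
      (φ.codRestrict _ hφ), ?_⟩
    ext x
    exact AddMonoidHom.apply_ofInjective_symm zmodTwoToAddCircle_injective
      (φ.codRestrict _ hφ x)

end TwoElementary

section TorsionCounting

variable {A : Type*} [AddCommGroup A]

lemma mem_torsionBy_two {x : A} : x ∈ torsionBy A 2 ↔ x + x = 0 := by
  rw [← two_nsmul]
  exact torsionBy.nsmul_iff

lemma ell2_eq_factorization_card_torsionBy :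
    ell2 A = (Nat.card (torsionBy A 2)).factorization 2 := by
  rw [ell2, Nat.card_congr (Equiv.subtypeEquivRight fun _ => mem_torsionBy_two.symm)]

lemma ell2_eq_factorization_card_s19 (hA : ∀ x : A, x + x = 0) :
    ell2 A = (Nat.card A).factorization 2 := by
  rw [ell2, Nat.card_congr (Equiv.subtypeUnivEquiv hA)]

lemma card_torsionBy_two_prod (B : Type*) [AddCommGroup B] :
    Nat.card (torsionBy (A × B) 2) = Nat.card (torsionBy A 2) * Nat.card (torsionBy B 2) := by
  have : torsionBy (A × B) 2 = (torsionBy A 2).prod (torsionBy B 2) := by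
    ext
    simp [mem_prod, Prod.ext_iff]
  rw [this, Nat.card_congr (prodEquiv _ _).toEquiv, Nat.card_prod]

lemma AddMonoidHom.card_eq_card_range_mul_card_ker {B : Type*} [AddCommGroup B]
    (f : A →+ B) :
    Nat.card A = Nat.card f.range * Nat.card f.ker := by
  rw [← f.ker.card_mul_index, index_ker, mul_comm]

lemma card_torsionBy_two_eq_card_torsionBy_two_quotient_mul (Γ : AddSubgroup A)
    (hΓ : ∀ p : A, p + p ∈ Γ → p + p = 0) :
    Nat.card (torsionBy A 2) = Nat.card (torsionBy (A ⧸ Γ) 2) * Nat.card Γ := by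
  have hΓ2 : Γ ≤ torsionBy A 2 := fun x hx => mem_torsionBy_two.2 (hΓ x (Γ.add_mem hx hx))
  let f := (QuotientAddGroup.mk' Γ).comp (torsionBy A 2).subtype
  have hrange : f.range = torsionBy (A ⧸ Γ) 2 := by
    ext q
    induction q using QuotientAddGroup.induction_on with | H p => ?_
    rw [mem_torsionBy_two]
    constructor
    · rintro ⟨z, hz⟩
      rw [← hz, ← map_add, (Subtype.ext (mem_torsionBy_two.1 z.2) : z + z = 0), map_zero]
    · intro hp
      rw [← QuotientAddGroup.mk_add, QuotientAddGroup.eq_zero_iff] at hp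
      exact ⟨⟨p, mem_torsionBy_two.2 (hΓ p hp)⟩, rfl⟩
  have hker : f.ker = Γ.addSubgroupOf (torsionBy A 2) := by
    ext z
    simp [f, QuotientAddGroup.eq_zero_iff, mem_addSubgroupOf]
  rw [f.card_eq_card_range_mul_card_ker, hrange, hker,
    Nat.card_congr (addSubgroupOfEquivOfLe hΓ2).toEquiv]

variable {C H : Type*} [AddCommGroup C] [AddCommGroup H]

lemma mem_biperp_range_iff (B : A →+ A →+ C) (ι : H →+ A) {z : A} :
    z ∈ biperp B ι.range ↔ (B z).comp ι = 0 := by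
  simp [biperp, DFunLike.ext_iff]

lemma card_torsionBy_two_eq_card_addMonoidHom_mul (B : A →+ A →+ C) (ι : H →+ A)
    (hB : ∀ φ : H →+ C, ∃ z ∈ torsionBy A 2, (B z).comp ι = φ) :
    Nat.card (torsionBy A 2) =
      Nat.card (H →+ C) * Nat.card (torsionBy (biperp B ι.range) 2) := by
  let θ := (B.compl₂ ι).comp (torsionBy A 2).subtype
  have hrange : θ.range = ⊤ := by
    refine AddMonoidHom.range_eq_top.2 fun φ => ?_
    obtain ⟨z, hz, rfl⟩ := hB φ
    exact ⟨⟨z, hz⟩, rfl⟩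
  have hker : θ.ker ≃ torsionBy (biperp B ι.range) 2 :=
    { toFun z := ⟨⟨z.1, (mem_biperp_range_iff B ι).2 z.2⟩,
        mem_torsionBy_two.2 (Subtype.ext (mem_torsionBy_two.1 z.1.2))⟩
      invFun z := ⟨⟨z.1, mem_torsionBy_two.2 (congrArg Subtype.val (mem_torsionBy_two.1 z.2))⟩,
        (mem_biperp_range_iff B ι).1 z.1.2⟩
      left_inv _ := rfl
      right_inv _ := rfl }
  rw [θ.card_eq_card_range_mul_card_ker, hrange, Nat.card_congr topEquiv.toEquiv,
    Nat.card_congr hker]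

end TorsionCounting

section Graph

variable {F G C : Type*} [AddCommGroup F] [AddCommGroup G] [AddCommGroup C]
  {H : AddSubgroup F}

lemma range_subtype_prod_le_biperp (f : F → C) (g : G → C) {bf : F →+ F →+ C}
    {bg : G →+ G →+ C} (hbf : ∀ x y, bf x y = f (x + y) - f x - f y)
    (hbg : ∀ x y, bg x y = g (x + y) - g x - g y) (γ : H →+ G) (hγ : ∀ x : H, g (γ x) = f x) :
    (H.subtype.prod γ).range ≤ biperp (sumForm bf bg) (H.subtype.prod γ).range := by
  rintro _ ⟨x, rfl⟩ _ ⟨y, rfl⟩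
  change bf x y - bg (γ x) (γ y) = 0
  rw [hbf, hbg, ← map_add, hγ, hγ, hγ, H.coe_add, sub_self]

lemma add_self_eq_zero_of_add_self_mem_range (hF : ∀ x : F, x + x = 0) (γ : H →+ G)
    {p : F × G} (hp : p + p ∈ (H.subtype.prod γ).range) : p + p = 0 := by
  obtain ⟨x, hx⟩ := hp
  have hx0 : x = 0 := Subtype.ext ((congrArg Prod.fst hx).trans (hF p.1))
  rw [← hx, hx0, map_zero]

end Graph

section Hyperbolic

variable {n : ℕ}

lemma pi_zmod_two_prod_add_self {ι : Type*} (v : ι → ZMod 2 × ZMod 2) : v + v = 0 := by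
  funext i
  exact CharTwo.add_self_eq_zero (v i)

lemma qU_add_sub_sub (x y : Fin n → ZMod 2 × ZMod 2) :
    qU n (x + y) - qU n x - qU n y =
      zmodTwoToAddCircle (∑ i, ((x i).1 * (y i).2 + (x i).2 * (y i).1)) := by
  simp only [qU, q1_eq, ← map_sum, ← map_sub, ← Finset.sum_sub_distrib, Pi.add_apply,
    Prod.fst_add, Prod.snd_add]
  congr 1
  exact Finset.sum_congr rfl fun i _ => by ring

variable {bf : (Fin n → ZMod 2 × ZMod 2) →+ (Fin n → ZMod 2 × ZMod 2) →+ AddCircle (2 : ℚ)}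

lemma injective_of_polar_qU (hbf : ∀ x y, bf x y = qU n (x + y) - qU n x - qU n y) :
    Injective bf := by
  refine (injective_iff_map_eq_zero _).2 fun x hx => funext fun i => ?_
  have hsum (y : Fin n → ZMod 2 × ZMod 2) :
      ∑ j, ((x j).1 * (y j).2 + (x j).2 * (y j).1) = 0 := by
    apply zmodTwoToAddCircle_injective
    rw [← qU_add_sub_sub, ← hbf, hx, map_zero]
    rfl
  have h1 := hsum (Pi.single i (1, 0))
  have h2 := hsum (Pi.single i (0, 1))
  simp only [Pi.single_apply, apply_ite Prod.fst, apply_ite Prod.snd, Prod.fst_zero, Prod.snd_zero,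
    ite_self, mul_zero, mul_ite, mul_one, zero_add, add_zero, Finset.sum_ite_eq', Finset.mem_univ,
    ↓reduceIte] at h1 h2
  exact Prod.ext h2 h1

lemma surjective_of_polar_qU (hbf : ∀ x y, bf x y = qU n (x + y) - qU n x - qU n y) :
    Surjective bf := by
  have hcard := card_addMonoidHom_addCircle_two (pi_zmod_two_prod_add_self (ι := Fin n))
  have : Finite ((Fin n → ZMod 2 × ZMod 2) →+ AddCircle (2 : ℚ)) :=
    Nat.finite_of_card_ne_zero (hcard ▸ Nat.card_pos.ne')
  exact ((injective_of_polar_qU hbf).bijective_of_nat_card_le hcard.le).2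

lemma exists_mem_torsionBy_two_comp_eq (hbf : ∀ x y, bf x y = qU n (x + y) - qU n x - qU n y)
    {G : Type*} [AddCommGroup G] (bg : G →+ G →+ AddCircle (2 : ℚ))
    {H : AddSubgroup (Fin n → ZMod 2 × ZMod 2)} (γ : H →+ G) (φ : H →+ AddCircle (2 : ℚ)) :
    ∃ z ∈ torsionBy ((Fin n → ZMod 2 × ZMod 2) × G) 2,
      (sumForm bf bg z).comp (H.subtype.prod γ) = φ := by
  have : Fact ((0 : ℚ) < 2) := ⟨two_pos⟩
  obtain ⟨φ', hφ'⟩ := (Module.Baer.of_divisible (AddCircle (2 : ℚ))).extension_property_addMonoidHom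
    H.subtype H.subtype_injective φ
  obtain ⟨x, rfl⟩ := surjective_of_polar_qU hbf φ'
  refine ⟨(x, 0), mem_torsionBy_two.2 (Prod.ext (pi_zmod_two_prod_add_self x) (add_zero 0)), ?_⟩
  ext h
  change bf x h - bg 0 (γ h) = φ h
  rw [← hφ', map_zero, AddMonoidHom.zero_apply, sub_zero]
  rfl

end Hyperbolic

theorem stmt19_general {G : Type*} [AddCommGroup G] [Finite G] (n : ℕ)
    (g : G → AddCircle (2 : ℚ))
    (bg : G →+ G →+ AddCircle (2 : ℚ))
    (hbg : ∀ x y, bg x y = g (x + y) - g x - g y)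
    (bf : (Fin n → ZMod 2 × ZMod 2) →+ (Fin n → ZMod 2 × ZMod 2) →+ AddCircle (2 : ℚ))
    (hbf : ∀ x y, bf x y = qU n (x + y) - qU n x - qU n y)
    (H : AddSubgroup (Fin n → ZMod 2 × ZMod 2)) (K : AddSubgroup G)
    (γ : ↥H ≃+ ↥K) (hγ : ∀ x : ↥H, g ↑(γ x) = qU n ↑x) :
    ∀ (Γ : AddSubgroup ((Fin n → ZMod 2 × ZMod 2) × G)),
      Γ = ((H.subtype).prod ((K.subtype).comp γ.toAddMonoidHom)).range →
      ell2 (Fin n → ZMod 2 × ZMod 2) + ell2 G =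
        ell2 (↥(biperp (sumForm bf bg) Γ) ⧸ Γ.addSubgroupOf (biperp (sumForm bf bg) Γ)) +
          2 * ell2 ↥H := by
  rintro Γ rfl
  set ι := H.subtype.prod (K.subtype.comp γ.toAddMonoidHom)
  set P := biperp (sumForm bf bg) ι.range
  have hF := pi_zmod_two_prod_add_self (ι := Fin n)
  have hH (h : H) : h + h = 0 := Subtype.ext (hF h)
  have hΓ : Nat.card (ι.range.addSubgroupOf P) = Nat.card H := by
    have hι : Injective ι := fun x y hxy => Subtype.ext (congrArg Prod.fst hxy)
    rw [Nat.card_congr (addSubgroupOfEquivOfLe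
      (range_subtype_prod_le_biperp (qU n) g hbf hbg _ hγ)).toEquiv]
    exact Nat.card_congr (AddMonoidHom.ofInjective hι).toEquiv.symm
  have hcard := card_torsionBy_two_eq_card_addMonoidHom_mul (sumForm bf bg) ι
    (exists_mem_torsionBy_two_comp_eq hbf bg _)
  rw [card_torsionBy_two_prod, card_addMonoidHom_addCircle_two hH,
    card_torsionBy_two_eq_card_torsionBy_two_quotient_mul (ι.range.addSubgroupOf P)
      fun p hp => Subtype.ext (add_self_eq_zero_of_add_self_mem_range hF _ hp),
    hΓ] at hcard
  have hv2 := congrArg (fun m => m.factorization 2) hcard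
  simp only [Nat.factorization_mul, Nat.card_pos.ne', mul_ne_zero, ne_eq, not_false_eq_true,
    Finsupp.add_apply] at hv2
  rw [ell2_eq_factorization_card_s19 hH, ell2_eq_factorization_card_torsionBy,
    ell2_eq_factorization_card_torsionBy, ell2_eq_factorization_card_torsionBy, hv2]
  ring

/-- The length identity `ℓ₂(F) + ℓ₂(G) = ℓ₂(Γ^⊥/Γ) + 2ℓ₂(H)` for the graph `Γ` of an
isometry `γ : f|H → g|K`, where `f ≅ n·u₁` and `g` is a nondegenerate finite quadratic
form; `Γ^⊥` is taken in `F ⊕ G` with respect to the bilinear form of `f ⊕ (−g)`. -/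
theorem stmt19 {G : Type*} [AddCommGroup G] [Finite G] (n : ℕ)
    (g : G → AddCircle (2 : ℚ))
    (hg : ∀ (m : ℤ) (a : G), g (m • a) = (m ^ 2 : ℤ) • g a)
    (bg : G →+ G →+ AddCircle (2 : ℚ))
    (hbg : ∀ x y, bg x y = g (x + y) - g x - g y)
    (hnd : ∀ a : G, (∀ b : G, bg a b = 0) → a = 0)
    (bf : (Fin n → ZMod 2 × ZMod 2) →+ (Fin n → ZMod 2 × ZMod 2) →+ AddCircle (2 : ℚ))
    (hbf : ∀ x y, bf x y = qU n (x + y) - qU n x - qU n y)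
    (H : AddSubgroup (Fin n → ZMod 2 × ZMod 2)) (K : AddSubgroup G)
    (γ : ↥H ≃+ ↥K) (hγ : ∀ x : ↥H, g ↑(γ x) = qU n ↑x) :
    ∀ (Γ : AddSubgroup ((Fin n → ZMod 2 × ZMod 2) × G)),
      Γ = ((H.subtype).prod ((K.subtype).comp γ.toAddMonoidHom)).range →
      ell2 (Fin n → ZMod 2 × ZMod 2) + ell2 G =
        ell2 (↥(biperp (sumForm bf bg) Γ) ⧸ Γ.addSubgroupOf (biperp (sumForm bf bg) Γ)) +
          2 * ell2 ↥H :=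
  stmt19_general n g bg hbg bf hbf H K γ hγ
end
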